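/- arXiv:2108.10075 — 8 statements merged into one kernel-verified Lean document; each statement's English description precedes it below -/
import Mathlib

section
/- Let F be the distribution function of a probability measure on [0,∞) with F(0)=0, and let Ψ_F be the compounding operator. Then for every measurable locally bounded h : [0,∞) → ℝ, every x ≥ 0 and every n ∈ ℕ, the iterated operator satisfies ‖Ψ_Fⁿ h‖_{[0,x]} ≤ (2ⁿ xⁿ / n!) · ‖h‖_{[0,x]}. -/
open MeasureTheory Set Filter

/-- The compounding operator `Ψ_F` associated with the probability measure `μ` on `[0,∞)`
(whose distribution function is `F`, so that `F(0) = 0` reads `μ (Iic 0) = 0`):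
`(Ψ_F h)(x) = ∫₀ˣ (h(z) - ∫₀ᶻ h(z-y) dF(y)) dz`,
the inner integral being the Lebesgue–Stieltjes integral with respect to `F`. -/
noncomputable def Psi (μ : Measure ℝ) (h : ℝ → ℝ) : ℝ → ℝ :=
  fun x => ∫ z in (0:ℝ)..x, (h z - ∫ y in Icc (0:ℝ) z, h (z - y) ∂μ)

/-- `h : [0,∞) → ℝ` is locally bounded. -/
def LocBdd (h : ℝ → ℝ) : Prop :=
  ∀ x : ℝ, ∃ M : ℝ, ∀ z ∈ Icc (0:ℝ) x, |h z| ≤ M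

/-- `‖h‖_{[0,x]} = sup_{z ∈ [0,x]} |h z|`. -/
noncomputable def supNorm (h : ℝ → ℝ) (x : ℝ) : ℝ :=
  sSup ((fun z => |h z|) '' Icc (0:ℝ) x)

/-!
Induction on `n` gives the pointwise bound `|Ψ_Fⁿ h (w)| ≤ 2ⁿ ‖h‖_{[0,x]} wⁿ / n!` for
`w ∈ [0,x]`. In the step, both `g(z)` and `∫₀ᶻ g(z-y) dF(y)` are bounded by the same
`C zⁿ`, since `(z-y)ⁿ ≤ zⁿ` and `F` has total mass at most one; so the integrand of `Ψ_F g`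
is at most `2 C zⁿ`, and integrating over `[0,w]` gives `2 C wⁿ⁺¹/(n+1)`.
-/

lemma abs_le_supNorm {h : ℝ → ℝ} (hbdd : LocBdd h) {x z : ℝ} (hz : z ∈ Icc (0:ℝ) x) :
    |h z| ≤ supNorm h x := by
  obtain ⟨M, hM⟩ := hbdd x
  exact le_csSup ⟨M, by rintro _ ⟨t, ht, rfl⟩; exact hM t ht⟩ (mem_image_of_mem _ hz)

lemma supNorm_le {h : ℝ → ℝ} {x B : ℝ} (hB : 0 ≤ B) (hle : ∀ z ∈ Icc (0:ℝ) x, |h z| ≤ B) :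
    supNorm h x ≤ B :=
  Real.sSup_le (by rintro _ ⟨z, hz, rfl⟩; exact hle z hz) hB

section Step

variable {μ : Measure ℝ} [IsZeroOrProbabilityMeasure μ] {g : ℝ → ℝ} {C : ℝ} {n : ℕ}

lemma abs_setIntegral_le_of_abs_le {s : Set ℝ} {f : ℝ → ℝ} (hC : 0 ≤ C)
    (hf : ∀ y ∈ s, |f y| ≤ C) : |∫ y in s, f y ∂μ| ≤ C :=
  calc |∫ y in s, f y ∂μ| ≤ C * μ.real s :=
        norm_setIntegral_le_of_norm_le_const (f := f) (measure_lt_top μ s) hf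
    _ ≤ C := mul_le_of_le_one_right hC measureReal_le_one

lemma abs_psi_integrand_le (hC : 0 ≤ C) {z : ℝ} (hz : 0 ≤ z)
    (hg : ∀ t ∈ Icc (0:ℝ) z, |g t| ≤ C * t ^ n) :
    |g z - ∫ y in Icc (0:ℝ) z, g (z - y) ∂μ| ≤ 2 * C * z ^ n := by
  have hshift : ∀ y ∈ Icc (0:ℝ) z, |g (z - y)| ≤ C * z ^ n := by
    rintro y ⟨hy0, hyz⟩
    calc |g (z - y)| ≤ C * (z - y) ^ n := hg _ ⟨by linarith, by linarith⟩
      _ ≤ C * z ^ n := by gcongr; linarith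
  calc |g z - ∫ y in Icc (0:ℝ) z, g (z - y) ∂μ|
      ≤ |g z| + |∫ y in Icc (0:ℝ) z, g (z - y) ∂μ| := abs_sub _ _
    _ ≤ C * z ^ n + C * z ^ n :=
        add_le_add (hg z ⟨hz, le_rfl⟩) (abs_setIntegral_le_of_abs_le (by positivity) hshift)
    _ = 2 * C * z ^ n := by ring

lemma abs_psi_le (hC : 0 ≤ C) {w : ℝ} (hw : 0 ≤ w)
    (hg : ∀ t ∈ Icc (0:ℝ) w, |g t| ≤ C * t ^ n) :
    |Psi μ g w| ≤ 2 * C * (w ^ (n + 1) / (n + 1)) := by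
  have hbound : ∀ z ∈ Ioc (0:ℝ) w,
      ‖g z - ∫ y in Icc (0:ℝ) z, g (z - y) ∂μ‖ ≤ 2 * C * z ^ n := fun z hz =>
    abs_psi_integrand_le hC hz.1.le fun t ht => hg t ⟨ht.1, ht.2.trans hz.2⟩
  calc |Psi μ g w| ≤ ∫ z in (0:ℝ)..w, 2 * C * z ^ n :=
        intervalIntegral.norm_integral_le_of_norm_le hw (.of_forall hbound)
          (by apply Continuous.intervalIntegrable; fun_prop)
    _ = 2 * C * (w ^ (n + 1) / (n + 1)) := by
        simp [intervalIntegral.integral_const_mul, integral_pow]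

end Step

lemma abs_psi_iterate_le {μ : Measure ℝ} [IsZeroOrProbabilityMeasure μ] {h : ℝ → ℝ} {x S : ℝ}
    (hS0 : 0 ≤ S) (hS : ∀ z ∈ Icc (0:ℝ) x, |h z| ≤ S) (n : ℕ) :
    ∀ w ∈ Icc (0:ℝ) x, |(Psi μ)^[n] h w| ≤ 2 ^ n * S / n.factorial * w ^ n := by
  induction n with
  | zero => simpa using hS
  | succ n ih =>
    rintro w ⟨hw0, hwx⟩
    rw [Function.iterate_succ_apply']
    calc |Psi μ ((Psi μ)^[n] h) w|
        ≤ 2 * (2 ^ n * S / n.factorial) * (w ^ (n + 1) / (n + 1)) :=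
          abs_psi_le (by positivity) hw0 fun t ht => ih t ⟨ht.1, ht.2.trans hwx⟩
      _ = 2 ^ (n + 1) * S / (n + 1).factorial * w ^ (n + 1) := by
          rw [Nat.factorial_succ]
          push_cast
          field_simp
          ring

theorem psi_iter_bound_general (μ : Measure ℝ) [IsProbabilityMeasure μ]
    (h : ℝ → ℝ) (hbdd : LocBdd h)
    (x : ℝ) (hx : 0 ≤ x) (n : ℕ) :
    supNorm ((Psi μ)^[n] h) x ≤ (2 ^ n * x ^ n / (n.factorial : ℝ)) * supNorm h x := by
  have hS : ∀ z ∈ Icc (0:ℝ) x, |h z| ≤ supNorm h x := fun z hz => abs_le_supNorm hbdd hz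
  have hS0 : 0 ≤ supNorm h x := (abs_nonneg _).trans (hS 0 ⟨le_rfl, hx⟩)
  refine supNorm_le (by positivity) fun w hw => ?_
  calc |(Psi μ)^[n] h w| ≤ 2 ^ n * supNorm h x / n.factorial * w ^ n :=
        abs_psi_iterate_le hS0 hS n w hw
    _ ≤ 2 ^ n * supNorm h x / n.factorial * x ^ n := by gcongr; exacts [hw.1, hw.2]
    _ = 2 ^ n * x ^ n / n.factorial * supNorm h x := by ring

/-- for every measurable locally bounded `h`, every `x ≥ 0` and every `n ∈ ℕ`,
`‖Ψ_Fⁿ h‖_{[0,x]} ≤ (2ⁿ xⁿ / n!) · ‖h‖_{[0,x]}`. -/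
theorem psi_iter_bound (μ : Measure ℝ) [IsProbabilityMeasure μ] (hμ0 : μ (Iic 0) = 0)
    (h : ℝ → ℝ) (hmeas : Measurable h) (hbdd : LocBdd h)
    (x : ℝ) (hx : 0 ≤ x) (n : ℕ) :
    supNorm ((Psi μ)^[n] h) x ≤ (2 ^ n * x ^ n / (n.factorial : ℝ)) * supNorm h x :=
  psi_iter_bound_general μ h hbdd x hx n
end

section
/- Let F be the distribution function of a probability measure on [0,∞) with F(0)=0, let Ψ_F be the compounding operator, let α ∈ ℝ, and let g : [0,∞) → ℝ be measurable and locally bounded. Then there exists a unique measurable locally bounded function u : [0,∞) → ℝ satisfying u(x) = α ( g(x) + (Ψ_F u)(x) ) for all x ≥ 0. -/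
open MeasureTheory Set Filter

open Topology

namespace PsiProof

noncomputable def inr (μ : Measure ℝ) (h : ℝ → ℝ) (z : ℝ) : ℝ :=
  ∫ y in Icc (0:ℝ) z, h (z - y) ∂μ

lemma psi_def (μ : Measure ℝ) (h : ℝ → ℝ) (x : ℝ) :
    Psi μ h x = ∫ z in (0:ℝ)..x, (h z - inr μ h z) := rfl

lemma measurable_inr (μ : Measure ℝ) [IsProbabilityMeasure μ] {h : ℝ → ℝ} (hm : Measurable h) :
    Measurable (inr μ h) := by
  have h1 : ∀ z, inr μ h z = ∫ y, (Icc (0:ℝ) z).indicator (fun y => h (z - y)) y ∂μ := by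
    intro z
    rw [integral_indicator measurableSet_Icc]; rfl
  rw [show inr μ h = fun z => ∫ y, (Icc (0:ℝ) z).indicator (fun y => h (z - y)) y ∂μ from funext h1]
  have hsm : StronglyMeasurable (fun p : ℝ × ℝ =>
      (Icc (0:ℝ) p.1).indicator (fun y => h (p.1 - y)) p.2) := by
    apply Measurable.stronglyMeasurable
    have h2 : (fun p : ℝ × ℝ => (Icc (0:ℝ) p.1).indicator (fun y => h (p.1 - y)) p.2)
        = ({q : ℝ × ℝ | q.2 ∈ Icc 0 q.1}).indicator (fun q => h (q.1 - q.2)) := by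
      ext p
      by_cases hp : 0 ≤ p.2 ∧ p.2 ≤ p.1
      · simp [indicator, hp, mem_Icc]
      · simp [indicator, hp, mem_Icc]
    rw [h2]
    apply Measurable.indicator (hm.comp (measurable_fst.sub measurable_snd))
    have : {q : ℝ × ℝ | q.2 ∈ Icc 0 q.1} = {q : ℝ × ℝ | 0 ≤ q.2} ∩ {q : ℝ × ℝ | q.2 ≤ q.1} := by
      ext q; simp [Icc, and_comm]
    rw [this]
    exact (measurableSet_le measurable_const measurable_snd).inter
      (measurableSet_le measurable_snd measurable_fst)
  exact hsm.integral_prod_right'.measurable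

lemma inr_of_neg (μ : Measure ℝ) (h : ℝ → ℝ) {z : ℝ} (hz : z < 0) : inr μ h z = 0 := by
  unfold inr
  rw [Icc_eq_empty (by linarith), Measure.restrict_empty, integral_zero_measure]

lemma abs_inr_le (μ : Measure ℝ) [IsProbabilityMeasure μ] {h : ℝ → ℝ} {C z : ℝ}
    (hC : 0 ≤ C) (hb : ∀ w ∈ Icc (0:ℝ) z, |h w| ≤ C) : |inr μ h z| ≤ C := by
  rcases lt_or_ge z 0 with hz | hz
  · rw [inr_of_neg μ h hz]; simpa
  have : ‖∫ y in Icc (0:ℝ) z, h (z - y) ∂μ‖ ≤ C * (μ (Icc (0:ℝ) z)).toReal := by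
    apply norm_setIntegral_le_of_norm_le_const (measure_lt_top μ _)
    intro y hy
    rw [Real.norm_eq_abs]
    exact hb _ ⟨by linarith [hy.2], by linarith [hy.1]⟩
  rw [show |inr μ h z| = ‖∫ y in Icc (0:ℝ) z, h (z - y) ∂μ‖ from (Real.norm_eq_abs _).symm]
  refine this.trans ?_
  calc C * (μ (Icc (0:ℝ) z)).toReal ≤ C * 1 := by
        gcongr
        exact ENNReal.toReal_le_of_le_ofReal one_pos.le (by simpa using prob_le_one)
    _ = C := mul_one C


lemma phi_measurable (μ : Measure ℝ) [IsProbabilityMeasure μ] {h : ℝ → ℝ} (hm : Measurable h) :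
    Measurable (fun z => h z - inr μ h z) :=
  hm.sub (measurable_inr μ hm)

lemma phi_intervalIntegrable (μ : Measure ℝ) [IsProbabilityMeasure μ] {h : ℝ → ℝ} {x M : ℝ}
    (hm : Measurable h) (hx : 0 ≤ x) (hb : ∀ z ∈ Icc (0:ℝ) x, |h z| ≤ M) :
    IntervalIntegrable (fun z => h z - inr μ h z) volume 0 x := by
  have hM : 0 ≤ M := le_trans (abs_nonneg _) (hb 0 ⟨le_refl 0, hx⟩)
  rw [intervalIntegrable_iff, uIoc_of_le hx]
  apply Measure.integrableOn_of_bounded (M := M + M) measure_Ioc_lt_top.ne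
    (phi_measurable μ hm).aestronglyMeasurable
  apply ae_restrict_of_forall_mem measurableSet_Ioc
  intro z hz
  have hz' : z ∈ Icc (0:ℝ) x := ⟨hz.1.le, hz.2⟩
  have h2 : |inr μ h z| ≤ M := abs_inr_le μ hM
    (fun w hw => hb w ⟨hw.1, hw.2.trans hz.2⟩)
  calc ‖h z - inr μ h z‖ ≤ |h z| + |inr μ h z| := abs_sub _ _
    _ ≤ M + M := add_le_add (hb z hz') h2

lemma inr_sub (μ : Measure ℝ) [IsProbabilityMeasure μ] {h₁ h₂ : ℝ → ℝ}
    (hm₁ : Measurable h₁) (hm₂ : Measurable h₂) {t M₁ M₂ : ℝ} (ht : 0 ≤ t)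
    (hb₁ : ∀ z ∈ Icc (0:ℝ) t, |h₁ z| ≤ M₁) (hb₂ : ∀ z ∈ Icc (0:ℝ) t, |h₂ z| ≤ M₂) :
    inr μ (fun w => h₁ w - h₂ w) t = inr μ h₁ t - inr μ h₂ t := by
  have key : ∀ (h : ℝ → ℝ) (M : ℝ), Measurable h → (∀ z ∈ Icc (0:ℝ) t, |h z| ≤ M) →
      Integrable (fun y => h (t - y)) (μ.restrict (Icc (0:ℝ) t)) := by
    intro h M hm hb
    apply Measure.integrableOn_of_bounded (M := M) (measure_ne_top _ _)
      ((hm.comp (measurable_const.sub measurable_id)).aestronglyMeasurable)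
    apply ae_restrict_of_forall_mem measurableSet_Icc
    intro y hy
    rw [mem_Icc] at hy
    show ‖h (t - y)‖ ≤ M
    rw [Real.norm_eq_abs]
    exact hb _ ⟨by linarith, by linarith⟩
  exact integral_sub (key h₁ M₁ hm₁ hb₁) (key h₂ M₂ hm₂ hb₂)

lemma inr_integrable (μ : Measure ℝ) [IsProbabilityMeasure μ] {h : ℝ → ℝ}
    (hm : Measurable h) {t M : ℝ} (hb : ∀ z ∈ Icc (0:ℝ) t, |h z| ≤ M) :
    Integrable (fun y => h (t - y)) (μ.restrict (Icc (0:ℝ) t)) := by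
  apply Measure.integrableOn_of_bounded (M := M) (measure_ne_top _ _)
    ((hm.comp (measurable_const.sub measurable_id)).aestronglyMeasurable)
  apply ae_restrict_of_forall_mem measurableSet_Icc
  intro y hy
  rw [mem_Icc] at hy
  show ‖h (t - y)‖ ≤ M
  rw [Real.norm_eq_abs]
  exact hb _ ⟨by linarith, by linarith⟩

lemma psi_sub_bound (μ : Measure ℝ) [IsProbabilityMeasure μ]
    {h₁ h₂ : ℝ → ℝ} (hm₁ : Measurable h₁) (hm₂ : Measurable h₂)
    {x : ℝ} (hx : 0 ≤ x) {M₁ M₂ : ℝ}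
    (hb₁ : ∀ z ∈ Icc (0:ℝ) x, |h₁ z| ≤ M₁) (hb₂ : ∀ z ∈ Icc (0:ℝ) x, |h₂ z| ≤ M₂)
    {C : ℝ} (hC : 0 ≤ C) (n : ℕ)
    (hd : ∀ z ∈ Icc (0:ℝ) x, |h₁ z - h₂ z| ≤ C * z ^ n / n.factorial) :
    |Psi μ h₁ x - Psi μ h₂ x| ≤ 2 * C * x ^ (n+1) / (n+1).factorial := by
  have hi₁ := phi_intervalIntegrable μ hm₁ hx hb₁
  have hi₂ := phi_intervalIntegrable μ hm₂ hx hb₂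
  rw [psi_def, psi_def, ← intervalIntegral.integral_sub hi₁ hi₂]
  have key : ∀ t ∈ uIoc (0:ℝ) x,
      ‖(h₁ t - inr μ h₁ t) - (h₂ t - inr μ h₂ t)‖ ≤ 2*C*t^n/(n.factorial:ℝ) := by
    intro t ht
    rw [uIoc_of_le hx] at ht
    have htx : t ∈ Icc (0:ℝ) x := ⟨ht.1.le, ht.2⟩
    have hsub : ∀ w ∈ Icc (0:ℝ) t, w ∈ Icc (0:ℝ) x := fun w hw => ⟨hw.1, hw.2.trans ht.2⟩
    have e2 : |inr μ h₁ t - inr μ h₂ t| ≤ C * t ^ n / n.factorial := by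
      rw [← inr_sub μ hm₁ hm₂ ht.1.le (fun w hw => hb₁ w (hsub w hw))
        (fun w hw => hb₂ w (hsub w hw))]
      have h0t : (0:ℝ) ≤ t := ht.1.le
      apply abs_inr_le μ (by positivity)
      intro w hw
      calc |h₁ w - h₂ w| ≤ C * w ^ n / n.factorial := hd w (hsub w hw)
        _ ≤ C * t ^ n / n.factorial := by gcongr; exacts [hw.1, hw.2]
    calc ‖(h₁ t - inr μ h₁ t) - (h₂ t - inr μ h₂ t)‖
        = |(h₁ t - h₂ t) - (inr μ h₁ t - inr μ h₂ t)| := by rw [Real.norm_eq_abs]; ring_nf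
      _ ≤ |h₁ t - h₂ t| + |inr μ h₁ t - inr μ h₂ t| := abs_sub _ _
      _ ≤ C * t ^ n / n.factorial + C * t ^ n / n.factorial :=
          add_le_add (hd t htx) e2
      _ = 2*C*t^n/(n.factorial:ℝ) := by ring
  have hbound : IntervalIntegrable (fun t => 2*C*t^n/(n.factorial:ℝ)) volume 0 x :=
    (Continuous.intervalIntegrable (by fun_prop) 0 x)
  refine le_trans (intervalIntegral.norm_integral_le_of_norm_le hx
    (Eventually.of_forall fun t ht => key t (by rwa [uIoc_of_le hx])) hbound) ?_
  have hcomp : ∫ t in (0:ℝ)..x, 2*C*t^n/(n.factorial:ℝ)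
      = 2 * C * x ^ (n+1) / (n+1).factorial := by
    have e3 : ∫ t in (0:ℝ)..x, 2*C*t^n/(n.factorial:ℝ)
        = (2*C/(n.factorial:ℝ)) * ∫ t in (0:ℝ)..x, t^n := by
      rw [← intervalIntegral.integral_const_mul]
      congr 1; ext t; ring
    have e4 : (((n+1).factorial:ℕ):ℝ) = ((n:ℝ)+1) * (n.factorial:ℝ) := by
      push_cast [Nat.factorial_succ]; ring
    rw [e3, integral_pow, zero_pow (Nat.succ_ne_zero n), e4]
    have : (n.factorial:ℝ) ≠ 0 := Nat.cast_ne_zero.2 n.factorial_ne_zero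
    have h5 : ((n:ℝ)+1) ≠ 0 := by positivity
    field_simp
    ring_nf
  rw [hcomp]

lemma psi_zero (μ : Measure ℝ) (x : ℝ) : Psi μ (fun _ => 0) x = 0 := by
  rw [psi_def]
  have : ∀ z, inr μ (fun _ => (0:ℝ)) z = 0 := fun z => by
    unfold inr; simp
  simp [this]


lemma psi_single_bound (μ : Measure ℝ) [IsProbabilityMeasure μ]
    {h : ℝ → ℝ} (hm : Measurable h) {x : ℝ} (hx : 0 ≤ x)
    {C : ℝ} (hC : 0 ≤ C) (n : ℕ)
    (hd : ∀ z ∈ Icc (0:ℝ) x, |h z| ≤ C * z ^ n / n.factorial) :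
    |Psi μ h x| ≤ 2 * C * x ^ (n+1) / (n+1).factorial := by
  have h0 : |Psi μ h x - Psi μ (fun _ => 0) x| ≤ 2 * C * x ^ (n+1) / (n+1).factorial := by
    apply psi_sub_bound μ hm measurable_const hx (M₂ := 0)
      (hb₁ := fun z hz => (hd z hz).trans (by
        have h0z : (0:ℝ) ≤ z := hz.1
        have hzx : z ≤ x := hz.2
        have hp : z ^ n ≤ x ^ n := pow_le_pow_left₀ h0z hzx n
        have hf : (0:ℝ) < n.factorial := by positivity
        exact (div_le_div_iff_of_pos_right hf).2 (mul_le_mul_of_nonneg_left hp hC)))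
      (hb₂ := fun z _ => by simp) hC n
    intro z hz
    simpa using hd z hz
  rwa [psi_zero, sub_zero] at h0

lemma continuous_psi (μ : Measure ℝ) [IsProbabilityMeasure μ] {h : ℝ → ℝ}
    (hm : Measurable h) (hb : ∀ T : ℝ, ∃ M : ℝ, ∀ z ∈ Icc (0:ℝ) T, |h z| ≤ M)
    (h0 : ∀ z < (0:ℝ), h z = 0) : Continuous (Psi μ h) := by
  have : Continuous (fun x => ∫ z in (0:ℝ)..x, (h z - inr μ h z)) := by
    apply intervalIntegral.continuous_primitive
    intro a b
    obtain ⟨M, hM⟩ := hb (max a b)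
    set K := max M 0 with hK
    rw [intervalIntegrable_iff]
    apply Measure.integrableOn_of_bounded (M := K + K)
      (by rw [show uIoc a b = Ioc (a ⊓ b) (a ⊔ b) from rfl]; exact measure_Ioc_lt_top.ne)
      (phi_measurable μ hm).aestronglyMeasurable
    apply ae_restrict_of_forall_mem measurableSet_uIoc
    intro z hz
    have hzb : z ≤ max a b := (hz.2 : z ≤ max a b)
    rcases lt_or_ge z 0 with hneg | hpos
    · rw [Real.norm_eq_abs, h0 z hneg, inr_of_neg μ h hneg, sub_zero, abs_zero]
      positivity
    · have h1 : |h z| ≤ K := le_trans (hM z ⟨hpos, hzb⟩) (le_max_left _ _)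
      have h2 : |inr μ h z| ≤ K := abs_inr_le μ (le_max_right _ _)
        (fun w hw => le_trans (hM w ⟨hw.1, hw.2.trans hzb⟩) (le_max_left _ _))
      calc ‖h z - inr μ h z‖ ≤ |h z| + |inr μ h z| := abs_sub _ _
        _ ≤ K + K := add_le_add h1 h2
  exact this

noncomputable def seq (μ : Measure ℝ) (g : ℝ → ℝ) : ℕ → ℝ → ℝ
  | 0 => fun x => if 0 ≤ x then g x else 0
  | n+1 => fun x => if 0 ≤ x then Psi μ (seq μ g n) x else 0

lemma seq_neg (μ : Measure ℝ) (g : ℝ → ℝ) (n : ℕ) {x : ℝ} (hx : x < 0) :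
    seq μ g n x = 0 := by
  cases n <;> simp [seq, not_le.2 hx]

lemma seq_props (μ : Measure ℝ) [IsProbabilityMeasure μ] {g : ℝ → ℝ}
    (hg : Measurable g) (hgb : LocBdd g) :
    ∀ n : ℕ, Measurable (seq μ g n) ∧
      ∀ T : ℝ, 0 ≤ T → ∀ M : ℝ, 0 ≤ M → (∀ z ∈ Icc (0:ℝ) T, |g z| ≤ M) →
        ∀ z ∈ Icc (0:ℝ) T, |seq μ g n z| ≤ M * (2*z) ^ n / n.factorial := by
  intro n
  induction n with
  | zero =>
    constructor
    · exact Measurable.ite measurableSet_Ici hg measurable_const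
    · intro T hT M hM hgM z hz
      simp only [seq, if_pos hz.1]
      simpa using hgM z hz
  | succ n ih =>
    obtain ⟨ihm, ihb⟩ := ih
    have hbound : ∀ T : ℝ, ∃ M : ℝ, ∀ z ∈ Icc (0:ℝ) T, |seq μ g n z| ≤ M := by
      intro T
      rcases lt_or_ge T 0 with hT | hT
      · exact ⟨0, fun z hz => absurd (hz.1.trans hz.2) (not_le.2 hT)⟩
      · obtain ⟨M, hM⟩ := hgb T
        have hM' : 0 ≤ max M 0 := le_max_right _ _
        refine ⟨(max M 0) * (2*T) ^ n / n.factorial, fun z hz => ?_⟩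
        refine (ihb T hT (max M 0) hM'
          (fun w hw => (hM w hw).trans (le_max_left _ _)) z hz).trans ?_
        have h1 : (2*z)^n ≤ (2*T)^n := pow_le_pow_left₀ (by linarith [hz.1]) (by linarith [hz.2]) n
        have hf : (0:ℝ) < n.factorial := by positivity
        exact (div_le_div_iff_of_pos_right hf).2 (mul_le_mul_of_nonneg_left h1 hM')
    have hmeas : Measurable (seq μ g (n+1)) := by
      show Measurable fun x => if 0 ≤ x then Psi μ (seq μ g n) x else 0
      exact Measurable.ite measurableSet_Ici
        (continuous_psi μ ihm hbound (fun z hz => seq_neg μ g n hz)).measurable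
        measurable_const
    refine ⟨hmeas, ?_⟩
    intro T hT M hM hgM z hz
    have h0z : (0:ℝ) ≤ z := hz.1
    show |if 0 ≤ z then Psi μ (seq μ g n) z else 0| ≤ M * (2*z) ^ (n+1) / (n+1).factorial
    rw [if_pos h0z]
    have step : |Psi μ (seq μ g n) z| ≤ 2 * (M * 2^n) * z ^ (n+1) / (n+1).factorial := by
      apply psi_single_bound μ ihm h0z (by positivity) n
      intro w hw
      have := ihb T hT M hM hgM w ⟨hw.1, hw.2.trans hz.2⟩
      calc |seq μ g n w| ≤ M * (2*w) ^ n / n.factorial := this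
        _ = (M * 2^n) * w ^ n / n.factorial := by rw [mul_pow]; ring
    refine step.trans (le_of_eq ?_)
    rw [mul_pow]
    ring

end PsiProof


open PsiProof in
/-- for every `α ∈ ℝ` and every measurable locally bounded `g`, there is one
unique measurable locally bounded function `u : [0,∞) → ℝ` with
`u(x) = α (g(x) + (Ψ_F u)(x))` for all `x ≥ 0`. -/
theorem exists_unique_solution (μ : Measure ℝ) [IsProbabilityMeasure μ]
    (hμ0 : μ (Iic 0) = 0) (α : ℝ)
    (g : ℝ → ℝ) (hg : Measurable g) (hgb : LocBdd g) :
    ∃ u : ℝ → ℝ, Measurable u ∧ LocBdd u ∧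
      (∀ x ≥ (0:ℝ), u x = α * (g x + Psi μ u x)) ∧
      ∀ v : ℝ → ℝ, Measurable v → LocBdd v →
        (∀ x ≥ (0:ℝ), v x = α * (g x + Psi μ v x)) → ∀ x ≥ (0:ℝ), v x = u x := by
  classical
  set f : ℕ → ℝ → ℝ := PsiProof.seq μ g with hf
  have hfm : ∀ n, Measurable (f n) := fun n => (seq_props μ hg hgb n).1
  have hfb : ∀ n, ∀ T : ℝ, 0 ≤ T → ∀ M : ℝ, 0 ≤ M → (∀ z ∈ Icc (0:ℝ) T, |g z| ≤ M) →
      ∀ z ∈ Icc (0:ℝ) T, |f n z| ≤ M * (2*z) ^ n / n.factorial :=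
    fun n => (seq_props μ hg hgb n).2
  have hMg : ∀ T : ℝ, ∃ M : ℝ, 0 ≤ M ∧ ∀ z ∈ Icc (0:ℝ) T, |g z| ≤ M := by
    intro T; obtain ⟨M, hM⟩ := hgb T
    exact ⟨max M 0, le_max_right _ _, fun z hz => (hM z hz).trans (le_max_left _ _)⟩
  set u : ℝ → ℝ := fun x => ∑' n, α^(n+1) * f n x with hu
  have hbsummx : ∀ c T : ℝ, Summable (fun n : ℕ => c * ((2 * |α| * T) ^ n / n.factorial)) := by
    intro c T
    have := (Real.summable_pow_div_factorial (2 * |α| * T)).mul_left c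
    simpa using this
  have hterm : ∀ T : ℝ, 0 ≤ T → ∀ M : ℝ, 0 ≤ M → (∀ z ∈ Icc (0:ℝ) T, |g z| ≤ M) →
      ∀ n : ℕ, ∀ z ∈ Icc (0:ℝ) T,
        |α^(n+1) * f n z| ≤ (|α| * M) * ((2 * |α| * T)^n / n.factorial) := by
    intro T hT M hM hgM n z hz
    have hfz := hfb n T hT M hM hgM z hz
    have h2z : (0:ℝ) ≤ 2 * z := by linarith [hz.1]
    have h2T : 2 * z ≤ 2 * T := by linarith [hz.2]
    calc |α^(n+1) * f n z| = |α|^(n+1) * |f n z| := by rw [abs_mul, abs_pow]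
      _ ≤ |α|^(n+1) * (M * (2*z) ^ n / n.factorial) := by
          apply mul_le_mul_of_nonneg_left hfz (by positivity)
      _ ≤ |α|^(n+1) * (M * (2*T) ^ n / n.factorial) := by
          apply mul_le_mul_of_nonneg_left _ (by positivity)
          have : (2*z)^n ≤ (2*T)^n := pow_le_pow_left₀ h2z h2T n
          have hfp : (0:ℝ) < n.factorial := by positivity
          exact (div_le_div_iff_of_pos_right hfp).2 (mul_le_mul_of_nonneg_left this hM)
      _ = (|α| * M) * ((2 * |α| * T)^n / n.factorial) := by
          rw [pow_succ]; ring
  have hsum : ∀ x : ℝ, Summable (fun n : ℕ => α^(n+1) * f n x) := by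
    intro x
    rcases lt_or_ge x 0 with hx | hx
    · have : (fun n : ℕ => α^(n+1) * f n x) = fun _ => 0 := funext fun n => by
        have hz : f n x = 0 := PsiProof.seq_neg μ g n hx
        rw [hz, mul_zero]
      rw [this]; exact summable_zero
    · obtain ⟨M, hM0, hM⟩ := hMg x
      apply Summable.of_norm_bounded (hbsummx (|α| * M) x)
      intro n
      rw [Real.norm_eq_abs]
      exact hterm x hx M hM0 hM n x ⟨hx, le_refl _⟩
  set S : ℕ → ℝ → ℝ := fun N z => ∑ k ∈ Finset.range N, α^(k+1) * f k z with hS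
  have hSm : ∀ N, Measurable (S N) := by
    intro N
    apply Finset.measurable_sum
    intro k _
    exact (hfm k).const_mul _
  have hStend : ∀ x, Tendsto (fun N => S N x) atTop (𝓝 (u x)) :=
    fun x => (hsum x).hasSum.tendsto_sum_nat
  have hum : Measurable u := by
    apply measurable_of_tendsto_metrizable hSm
    rw [tendsto_pi_nhds]
    exact hStend
  have huSb : ∀ T : ℝ, 0 ≤ T → ∃ B : ℝ, 0 ≤ B ∧ (∀ z ∈ Icc (0:ℝ) T, |u z| ≤ B) ∧
      (∀ N, ∀ z ∈ Icc (0:ℝ) T, |S N z| ≤ B) := by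
    intro T hT
    obtain ⟨M, hM0, hM⟩ := hMg T
    set b : ℕ → ℝ := fun n => (|α| * M) * ((2 * |α| * T)^n / n.factorial) with hb
    have hbs : Summable b := hbsummx _ _
    have hbnn : ∀ n, 0 ≤ b n := fun n => by
      have h2 : (0:ℝ) ≤ 2 * |α| * T := by
        have := abs_nonneg α
        nlinarith
      have h3 : (0:ℝ) < n.factorial := by positivity
      exact mul_nonneg (mul_nonneg (abs_nonneg α) hM0)
        (div_nonneg (pow_nonneg h2 n) h3.le)
    refine ⟨∑' n, b n, tsum_nonneg hbnn, ?_, ?_⟩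
    · intro z hz
      have hns : Summable (fun n => ‖α^(n+1) * f n z‖) := by
        apply Summable.of_nonneg_of_le (fun n => norm_nonneg _) _ hbs
        intro n
        rw [Real.norm_eq_abs]
        exact hterm T hT M hM0 hM n z hz
      calc |u z| ≤ ∑' n, ‖α^(n+1) * f n z‖ := by
            rw [← Real.norm_eq_abs]; exact norm_tsum_le_tsum_norm hns
        _ ≤ ∑' n, b n := Summable.tsum_le_tsum
            (fun n => by rw [Real.norm_eq_abs]; exact hterm T hT M hM0 hM n z hz) hns hbs
    · intro N z hz
      calc |S N z| ≤ ∑ k ∈ Finset.range N, |α^(k+1) * f k z| := Finset.abs_sum_le_sum_abs _ _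
        _ ≤ ∑ k ∈ Finset.range N, b k := Finset.sum_le_sum
            (fun k _ => hterm T hT M hM0 hM k z hz)
        _ ≤ ∑' n, b n := Summable.sum_le_tsum _ (fun k _ => hbnn k) hbs
  have hub : LocBdd u := by
    intro T
    rcases lt_or_ge T 0 with hT | hT
    · exact ⟨0, fun z hz => absurd (hz.1.trans hz.2) (not_le.2 hT)⟩
    · obtain ⟨B, _, hB, _⟩ := huSb T hT
      exact ⟨B, hB⟩
  have hfub : ∀ (k : ℕ) (t : ℝ), 0 ≤ t → ∃ Mk : ℝ, 0 ≤ Mk ∧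
      ∀ z ∈ Icc (0:ℝ) t, |f k z| ≤ Mk := by
    intro k t ht
    obtain ⟨M, hM0, hM⟩ := hMg t
    refine ⟨M * (2*t)^k / k.factorial, by positivity, fun z hz => ?_⟩
    refine (hfb k t ht M hM0 hM z hz).trans ?_
    have h1 : (2*z)^k ≤ (2*t)^k :=
      pow_le_pow_left₀ (by linarith [hz.1]) (by linarith [hz.2]) k
    have hfp : (0:ℝ) < k.factorial := by positivity
    exact (div_le_div_iff_of_pos_right hfp).2 (mul_le_mul_of_nonneg_left h1 hM0)
  -- the fixed point equation
  have hufix : ∀ x ≥ (0:ℝ), u x = α * (g x + Psi μ u x) := by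
    intro x hx
    obtain ⟨B, hB0, hBu, hBS⟩ := huSb x hx
    obtain ⟨M, hM0, hM⟩ := hMg x
    have stepA : ∀ N, Psi μ (S N) x = ∑ k ∈ Finset.range N, α^(k+1) * f (k+1) x := by
      intro N
      have hint : ∀ t : ℝ, inr μ (S N) t
          = ∑ k ∈ Finset.range N, α^(k+1) * inr μ (f k) t := by
        intro t
        rcases lt_or_ge t 0 with ht | ht
        · rw [inr_of_neg μ _ ht]
          have he : ∀ k ∈ Finset.range N, α^(k+1) * inr μ (f k) t = 0 := fun k _ => by
            rw [inr_of_neg μ _ ht, mul_zero]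
          rw [Finset.sum_congr rfl he]
          simp
        · show (∫ y in Icc (0:ℝ) t, S N (t - y) ∂μ) = _
          rw [show (fun y => S N (t - y)) = fun y => ∑ k ∈ Finset.range N,
            α^(k+1) * f k (t - y) from funext fun y => rfl]
          rw [integral_finset_sum _ (fun k _ => by
            obtain ⟨Mk, hMk0, hMk⟩ := hfub k t ht
            exact (inr_integrable μ (hfm k) hMk).const_mul _)]
          apply Finset.sum_congr rfl
          intro k _
          rw [integral_const_mul]
          rfl
      have hphi : (fun z => S N z - inr μ (S N) z)
          = fun z => ∑ k ∈ Finset.range N, α^(k+1) * (f k z - inr μ (f k) z) := by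
        funext z
        rw [hint z]
        rw [← Finset.sum_sub_distrib]
        apply Finset.sum_congr rfl
        intro k _
        ring
      rw [psi_def, hphi]
      rw [intervalIntegral.integral_finset_sum (fun k _ => by
        obtain ⟨Mk, hMk0, hMk⟩ := hfub k x hx
        exact (phi_intervalIntegrable μ (hfm k) hx hMk).const_mul _)]
      apply Finset.sum_congr rfl
      intro k _
      rw [intervalIntegral.integral_const_mul]
      congr 1
      have hstep : f (k+1) x = Psi μ (f k) x := by
        show PsiProof.seq μ g (k+1) x = _
        simp only [PsiProof.seq, if_pos hx]
        rfl
      rw [hstep, psi_def]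
    -- Step B : convergence of Psi of partial sums
    set b : ℕ → ℝ := fun n => (|α| * M) * ((2 * |α| * x)^n / n.factorial) with hbdef
    have hbs : Summable b := hbsummx _ _
    have hbnn : ∀ n, 0 ≤ b n := fun n => by
      have h2 : (0:ℝ) ≤ 2 * |α| * x := by
        have := abs_nonneg α
        nlinarith
      have h3 : (0:ℝ) < n.factorial := by positivity
      exact mul_nonneg (mul_nonneg (abs_nonneg α) hM0)
        (div_nonneg (pow_nonneg h2 n) h3.le)
    set tN : ℕ → ℝ := fun N => ∑' k, b (k + N) with htNdef
    have htail : ∀ N, ∀ z ∈ Icc (0:ℝ) x, |u z - S N z| ≤ tN N := by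
      intro N z hz
      have hsz := hsum z
      have e : u z - S N z = ∑' k, α^((k+N)+1) * f (k+N) z := by
        have h2 := Summable.sum_add_tsum_nat_add (f := fun n => α^(n+1) * f n z) N hsz
        have h3 : S N z + ∑' (k : ℕ), α^((k+N)+1) * f (k+N) z = u z := h2
        linarith
      rw [e]
      have hshiftb : Summable (fun k => b (k + N)) := (summable_nat_add_iff N).2 hbs
      have hns : Summable (fun k => ‖α^((k+N)+1) * f (k+N) z‖) := by
        apply Summable.of_nonneg_of_le (fun k => norm_nonneg _) _ hshiftb
        intro k
        rw [Real.norm_eq_abs]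
        exact hterm x hx M hM0 hM (k+N) z hz
      calc |∑' k, α^((k+N)+1) * f (k+N) z| ≤ ∑' k, ‖α^((k+N)+1) * f (k+N) z‖ := by
            rw [← Real.norm_eq_abs]; exact norm_tsum_le_tsum_norm hns
        _ ≤ ∑' k, b (k + N) := Summable.tsum_le_tsum
            (fun k => by rw [Real.norm_eq_abs]; exact hterm x hx M hM0 hM (k+N) z hz)
            hns hshiftb
    have htNnn : ∀ N, 0 ≤ tN N := fun N => tsum_nonneg (fun k => hbnn _)
    have htend0 : Tendsto tN atTop (𝓝 0) := tendsto_sum_nat_add b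
    have hPsiTend : Tendsto (fun N => Psi μ (S N) x) atTop (𝓝 (Psi μ u x)) := by
      rw [tendsto_iff_dist_tendsto_zero]
      apply squeeze_zero (fun N => dist_nonneg) (g := fun N => 2 * tN N * x)
      · intro N
        rw [Real.dist_eq]
        have hdiff := psi_sub_bound μ hum (hSm N) hx hBu (hBS N) (C := tN N)
          (htNnn N) 0 (fun z hz => by simpa using htail N z hz)
        rw [abs_sub_comm]
        calc |Psi μ u x - Psi μ (S N) x| ≤ 2 * tN N * x ^ (0+1) / (0+1).factorial := hdiff
          _ = 2 * tN N * x := by norm_num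
      · have h5 : Tendsto (fun N => 2 * tN N * x) atTop (𝓝 (2 * 0 * x)) :=
          (htend0.const_mul 2).mul_const x
        simpa using h5
    have hfix1 : Tendsto (fun N => S (N+1) x) atTop (𝓝 (u x)) :=
      (hStend x).comp (tendsto_add_atTop_nat 1)
    have heq : ∀ N, S (N+1) x = α * (g x + Psi μ (S N) x) := by
      intro N
      rw [stepA N]
      show (∑ k ∈ Finset.range (N+1), α^(k+1) * f k x) = _
      rw [Finset.sum_range_succ']
      have hf0 : f 0 x = g x := by
        show PsiProof.seq μ g 0 x = g x
        simp only [PsiProof.seq, if_pos hx]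
      rw [hf0, mul_add, Finset.mul_sum]
      rw [add_comm]
      congr 1
      · norm_num
      · apply Finset.sum_congr rfl
        intro k _
        ring
    have hrhs : Tendsto (fun N => α * (g x + Psi μ (S N) x)) atTop
        (𝓝 (α * (g x + Psi μ u x))) :=
      (tendsto_const_nhds.add hPsiTend).const_mul α
    exact tendsto_nhds_unique hfix1
      (by rw [show (fun N => S (N+1) x) = fun N => α * (g x + Psi μ (S N) x)
            from funext heq]
          exact hrhs)
  refine ⟨u, hum, hub, hufix, ?_⟩
  -- uniqueness
  intro v hvm hvb hveq x hx
  obtain ⟨Mu, hMu⟩ := hub x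
  obtain ⟨Mv, hMv⟩ := hvb x
  set M' : ℝ := max (Mv + Mu) 0 with hM'def
  have hM'0 : 0 ≤ M' := le_max_right _ _
  have hbase : ∀ z ∈ Icc (0:ℝ) x, |v z - u z| ≤ M' := fun z hz =>
    (abs_sub _ _).trans (le_trans (add_le_add (hMv z hz) (hMu z hz)) (le_max_left _ _))
  have hind : ∀ n : ℕ, ∀ z ∈ Icc (0:ℝ) x,
      |v z - u z| ≤ (M' * (2 * |α|)^n) * z^n / n.factorial := by
    intro n
    induction n with
    | zero => intro z hz; simpa using hbase z hz
    | succ n ih =>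
      intro z hz
      have h0z : (0:ℝ) ≤ z := hz.1
      have hvz : v z = α * (g z + Psi μ v z) := hveq z h0z
      have huz : u z = α * (g z + Psi μ u z) := hufix z h0z
      have hsplit : v z - u z = α * (Psi μ v z - Psi μ u z) := by
        rw [hvz, huz]; ring
      rw [hsplit, abs_mul]
      have hstep := psi_sub_bound μ hvm hum h0z
        (fun w hw => hMv w ⟨hw.1, hw.2.trans hz.2⟩)
        (fun w hw => hMu w ⟨hw.1, hw.2.trans hz.2⟩)
        (C := M' * (2 * |α|)^n) (by positivity) n
        (fun w hw => ih w ⟨hw.1, hw.2.trans hz.2⟩)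
      calc |α| * |Psi μ v z - Psi μ u z|
          ≤ |α| * (2 * (M' * (2 * |α|)^n) * z^(n+1) / (n+1).factorial) :=
            mul_le_mul_of_nonneg_left hstep (abs_nonneg α)
        _ = (M' * (2 * |α|)^(n+1)) * z^(n+1) / (n+1).factorial := by
            rw [pow_succ]; ring
  have hxb : ∀ n : ℕ, |v x - u x| ≤ (M' * (2 * |α|)^n) * x^n / n.factorial :=
    fun n => hind n x ⟨hx, le_refl x⟩
  have h0 : Tendsto (fun n : ℕ => (M' * (2 * |α|)^n) * x^n / n.factorial) atTop (𝓝 0) := by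
    have he : (fun n : ℕ => (M' * (2 * |α|)^n) * x^n / n.factorial)
        = fun n : ℕ => M' * ((2 * |α| * x)^n / n.factorial) := funext fun n => by
      rw [mul_pow]; ring
    rw [he]
    have h6 := ((Real.summable_pow_div_factorial (2 * |α| * x)).tendsto_atTop_zero).const_mul M'
    simpa using h6
  have hle : |v x - u x| ≤ 0 := ge_of_tendsto h0 (Eventually.of_forall hxb)
  have : v x - u x = 0 := abs_eq_zero.1 (le_antisymm hle (abs_nonneg _))
  linarith
end

section
/- Let F be the distribution function of a probability measure on [0,∞) with F(0)=0, let Ψ_F be the compounding operator, let α ∈ ℝ, and let g : [0,∞) → ℝ be measurable and locally bounded. Then the unique solution u_{α,g} of u = α(g + Ψ_F u) admits the series representation u_{α,g}(x) = Σ_{n=0}^∞ α^{n+1} (Ψ_Fⁿ g)(x) for every x ≥ 0, and for each fixed x the series converges uniformly with respect to α on compact intervals of ℝ. -/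
open MeasureTheory Set Filter

open Topology
open scoped Interval

/-!
`Ψ_F` is a Volterra operator: if `|h z| ≤ C zⁿ` on `[0, x]`, the inner Stieltjes integral obeys
the same bound because `F` is a probability distribution, so `|Ψ_F h (x)| ≤ 2 C x^{n+1} / (n+1)`.
Hence `|Ψ_Fⁿ h (x)| ≤ M (2x)ⁿ / n!` with `M` a bound of `|h|` on `[0, x]`, and the series is
dominated by an exponential series, uniformly for bounded `α`. Unfolding `u = α (g + Ψ_F u)`
`N` times by linearity of `Ψ_F` gives `u = ∑_{n<N} α^{n+1} Ψ_Fⁿ g + α^N Ψ_F^N u`, whose remainder tends to `0`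
by the same bound.
-/

noncomputable def stieltjesConv (μ : Measure ℝ) (h : ℝ → ℝ) (z : ℝ) : ℝ :=
  ∫ y in Icc (0:ℝ) z, h (z - y) ∂μ

/-- A class of functions stable under `Ψ_F`; a function given on `[0, ∞)` enters it after
extension by zero. -/
structure MeasurableLocBdd (h : ℝ → ℝ) : Prop where
  measurable : Measurable h
  exists_bound : ∀ b : ℝ, ∃ M, 0 ≤ M ∧ ∀ z ∈ Icc (-b) b, |h z| ≤ M

theorem eq_sum_add_pow_mul_of_eq_mul_add {α : ℝ} {a b : ℕ → ℝ}
    (h : ∀ n, a n = α * (b n + a (n + 1))) (N : ℕ) :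
    a 0 = ∑ n ∈ Finset.range N, α ^ (n + 1) * b n + α ^ N * a N := by
  induction N with
  | zero => simp
  | succ N ih => rw [ih, Finset.sum_range_succ, h N]; ring

section StieltjesConv

variable (μ : Measure ℝ) {h h₁ h₂ : ℝ → ℝ}

theorem Psi_apply (x : ℝ) : Psi μ h x = ∫ z in (0:ℝ)..x, (h z - stieltjesConv μ h z) := rfl

theorem measurable_stieltjesConv [SFinite μ] (hh : Measurable h) :
    Measurable (stieltjesConv μ h) := by
  set S := {p : ℝ × ℝ | 0 ≤ p.2 ∧ p.2 ≤ p.1}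
  have hS : MeasurableSet S :=
    (measurableSet_le measurable_const measurable_snd).inter
      (measurableSet_le measurable_snd measurable_fst)
  have hF : Measurable (S.indicator fun p : ℝ × ℝ => h (p.1 - p.2)) :=
    (hh.comp (measurable_fst.sub measurable_snd)).indicator hS
  have hconv :
      stieltjesConv μ h = fun z => ∫ y, S.indicator (fun p => h (p.1 - p.2)) (z, y) ∂μ := by
    funext z
    rw [stieltjesConv, ← integral_indicator measurableSet_Icc]
    rfl
  rw [hconv]
  exact hF.stronglyMeasurable.integral_prod_right'.measurable

theorem abs_stieltjesConv_le [IsProbabilityMeasure μ] {M b z : ℝ} (hM0 : 0 ≤ M)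
    (hM : ∀ w ∈ Icc (0:ℝ) b, |h w| ≤ M) (hz : z ≤ b) : |stieltjesConv μ h z| ≤ M :=
  calc |stieltjesConv μ h z| = ‖∫ y in Icc 0 z, h (z - y) ∂μ‖ := rfl
    _ ≤ M * μ.real (Icc 0 z) :=
        norm_setIntegral_le_of_norm_le_const (measure_lt_top _ _)
          fun y hy => hM _ ⟨by linarith [hy.2], by linarith [hy.1]⟩
    _ ≤ M * 1 := mul_le_mul_of_nonneg_left measureReal_le_one hM0
    _ = M := mul_one M

theorem integrableOn_comp_sub [IsFiniteMeasure μ] (hh : MeasurableLocBdd h) (z : ℝ) :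
    IntegrableOn (fun y => h (z - y)) (Icc (0:ℝ) z) μ := by
  obtain ⟨M, -, hM⟩ := hh.exists_bound |z|
  refine Measure.integrableOn_of_bounded (M := M) (measure_ne_top _ _)
    (hh.measurable.comp (measurable_const.sub measurable_id)).aestronglyMeasurable ?_
  filter_upwards [ae_restrict_mem measurableSet_Icc] with y hy
  exact hM _ ⟨by linarith [hy.2, abs_nonneg z], by linarith [hy.1, le_abs_self z]⟩

theorem stieltjesConv_mul_add [IsFiniteMeasure μ] (hh₁ : MeasurableLocBdd h₁)
    (hh₂ : MeasurableLocBdd h₂) (c z : ℝ) :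
    stieltjesConv μ (fun y => c * (h₁ y + h₂ y)) z =
      c * (stieltjesConv μ h₁ z + stieltjesConv μ h₂ z) := by
  rw [stieltjesConv, integral_const_mul,
    integral_add (integrableOn_comp_sub μ hh₁ z) (integrableOn_comp_sub μ hh₂ z)]
  rfl

theorem stieltjesConv_eqOn {b : ℝ} (h12 : EqOn h₁ h₂ (Icc 0 b)) :
    EqOn (stieltjesConv μ h₁) (stieltjesConv μ h₂) (Icc 0 b) := fun z hz =>
  setIntegral_congr_fun measurableSet_Icc fun y hy =>
    h12 ⟨by linarith [hy.2], by linarith [hy.1, hz.2]⟩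

end StieltjesConv

section Psi

variable (μ : Measure ℝ) {h h₁ h₂ : ℝ → ℝ}

theorem intervalIntegrable_sub_stieltjesConv [IsProbabilityMeasure μ] (hh : MeasurableLocBdd h)
    (a b : ℝ) : IntervalIntegrable (fun z => h z - stieltjesConv μ h z) volume a b := by
  set c := max |a| |b|
  obtain ⟨M, hM0, hM⟩ := hh.exists_bound c
  have hab : Ι a b ⊆ Icc (-c) c := uIoc_subset_uIcc.trans <|
    uIcc_subset_Icc (abs_le.mp (le_max_left _ _)) (abs_le.mp (le_max_right _ _))
  refine (intervalIntegrable_const (c := M + M)).mono_fun'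
    (hh.measurable.sub (measurable_stieltjesConv μ hh.measurable)).aestronglyMeasurable ?_
  filter_upwards [ae_restrict_mem measurableSet_uIoc] with z hz
  have hzc := hab hz
  calc ‖h z - stieltjesConv μ h z‖ ≤ |h z| + |stieltjesConv μ h z| := abs_sub _ _
    _ ≤ M + M := add_le_add (hM z hzc) <|
        abs_stieltjesConv_le μ hM0
          (fun w hw => hM w ⟨by linarith [hw.1, hzc.1, hzc.2], hw.2⟩) hzc.2

theorem continuous_Psi [IsProbabilityMeasure μ] (hh : MeasurableLocBdd h) :
    Continuous (Psi μ h) :=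
  intervalIntegral.continuous_primitive (intervalIntegrable_sub_stieltjesConv μ hh) 0

theorem measurableLocBdd_Psi [IsProbabilityMeasure μ] (hh : MeasurableLocBdd h) :
    MeasurableLocBdd (Psi μ h) := by
  refine ⟨(continuous_Psi μ hh).measurable, fun b => ?_⟩
  obtain ⟨C, hC⟩ := isCompact_Icc.exists_bound_of_continuousOn (continuous_Psi μ hh).continuousOn
  exact ⟨max C 0, le_max_right _ _, fun z hz => (hC z hz).trans (le_max_left _ _)⟩

theorem measurableLocBdd_iterate_Psi [IsProbabilityMeasure μ] (hh : MeasurableLocBdd h)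
    (n : ℕ) : MeasurableLocBdd ((Psi μ)^[n] h) := by
  induction n with
  | zero => exact hh
  | succ n ih => rw [Function.iterate_succ_apply']; exact measurableLocBdd_Psi μ ih

theorem MeasurableLocBdd.indicator_Ici (hm : Measurable h) (hb : LocBdd h) :
    MeasurableLocBdd ((Ici (0:ℝ)).indicator h) := by
  refine ⟨hm.indicator measurableSet_Ici, fun b => ?_⟩
  obtain ⟨M, hM⟩ := hb b
  refine ⟨max M 0, le_max_right _ _, fun z hz => ?_⟩
  by_cases hz0 : z ∈ Ici (0:ℝ)
  · rw [indicator_of_mem hz0]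
    exact (hM z ⟨hz0, hz.2⟩).trans (le_max_left _ _)
  · simp [indicator_of_notMem hz0]

theorem Psi_mul_add [IsProbabilityMeasure μ] (hh₁ : MeasurableLocBdd h₁)
    (hh₂ : MeasurableLocBdd h₂) (c : ℝ) :
    Psi μ (fun y => c * (h₁ y + h₂ y)) = fun x => c * (Psi μ h₁ x + Psi μ h₂ x) := by
  funext x
  rw [Psi_apply, Psi_apply, Psi_apply, ← intervalIntegral.integral_add
    (intervalIntegrable_sub_stieltjesConv μ hh₁ 0 x)
    (intervalIntegrable_sub_stieltjesConv μ hh₂ 0 x), ← intervalIntegral.integral_const_mul]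
  refine intervalIntegral.integral_congr fun z _ => ?_
  simp only [stieltjesConv_mul_add μ hh₁ hh₂]
  ring

theorem iterate_Psi_mul_add [IsProbabilityMeasure μ] (hh₁ : MeasurableLocBdd h₁)
    (hh₂ : MeasurableLocBdd h₂) (c : ℝ) (n : ℕ) :
    (Psi μ)^[n] (fun y => c * (h₁ y + h₂ y)) =
      fun x => c * ((Psi μ)^[n] h₁ x + (Psi μ)^[n] h₂ x) := by
  induction n with
  | zero => rfl
  | succ n ih =>
    simp only [Function.iterate_succ_apply', ih]
    exact Psi_mul_add μ (measurableLocBdd_iterate_Psi μ hh₁ n)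
      (measurableLocBdd_iterate_Psi μ hh₂ n) c

theorem Psi_eqOn {b : ℝ} (h12 : EqOn h₁ h₂ (Icc 0 b)) :
    EqOn (Psi μ h₁) (Psi μ h₂) (Icc 0 b) := by
  intro x hx
  refine intervalIntegral.integral_congr fun z hz => ?_
  rw [uIcc_of_le hx.1] at hz
  have hzb : z ∈ Icc (0:ℝ) b := ⟨hz.1, hz.2.trans hx.2⟩
  show h₁ z - stieltjesConv μ h₁ z = h₂ z - stieltjesConv μ h₂ z
  rw [h12 hzb, stieltjesConv_eqOn μ h12 hzb]

theorem iterate_Psi_eqOn (h12 : EqOn h₁ h₂ (Ici 0)) (n : ℕ) :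
    EqOn ((Psi μ)^[n] h₁) ((Psi μ)^[n] h₂) (Ici 0) := by
  induction n with
  | zero => exact h12
  | succ n ih =>
    intro x hx
    simp only [Function.iterate_succ_apply']
    exact Psi_eqOn μ (fun z hz => ih (mem_Ici.mpr hz.1)) ⟨hx, le_rfl⟩

theorem iterate_Psi_indicator_Ici (n : ℕ) :
    EqOn ((Psi μ)^[n] ((Ici (0:ℝ)).indicator h)) ((Psi μ)^[n] h) (Ici 0) :=
  iterate_Psi_eqOn μ (fun _ hz => indicator_of_mem hz h) n

end Psi

section Bounds

variable (μ : Measure ℝ) [IsProbabilityMeasure μ] {h : ℝ → ℝ}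

theorem abs_Psi_le_of_abs_le_mul_pow {C x : ℝ} {n : ℕ} (hC : 0 ≤ C) (hx : 0 ≤ x)
    (hb : ∀ z ∈ Icc 0 x, |h z| ≤ C * z ^ n) :
    |Psi μ h x| ≤ 2 * C * x ^ (n + 1) / (n + 1) := by
  have hconv : ∀ z ∈ Icc 0 x, |stieltjesConv μ h z| ≤ C * z ^ n := fun z hz =>
    abs_stieltjesConv_le μ (by have := hz.1; positivity) (fun w hw => (hb w
      ⟨hw.1, hw.2.trans hz.2⟩).trans (by gcongr; exacts [hw.1, hw.2])) le_rfl
  have hpow_integral : ∫ z in (0:ℝ)..x, 2 * C * z ^ n = 2 * C * x ^ (n + 1) / (n + 1) := by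
    rw [intervalIntegral.integral_const_mul, integral_pow]
    ring
  have hintegrand : ∀ z ∈ Ioc 0 x, ‖h z - stieltjesConv μ h z‖ ≤ 2 * C * z ^ n := by
    intro z hz
    have hz' : z ∈ Icc 0 x := Ioc_subset_Icc_self hz
    calc ‖h z - stieltjesConv μ h z‖ ≤ |h z| + |stieltjesConv μ h z| := abs_sub _ _
      _ ≤ 2 * C * z ^ n := by linarith [hb z hz', hconv z hz']
  calc |Psi μ h x| = ‖∫ z in (0:ℝ)..x, (h z - stieltjesConv μ h z)‖ := rfl
    _ ≤ ∫ z in (0:ℝ)..x, 2 * C * z ^ n :=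
        intervalIntegral.norm_integral_le_of_norm_le hx (Eventually.of_forall hintegrand)
          ((continuous_const.mul (continuous_pow n)).intervalIntegrable _ _)
    _ = 2 * C * x ^ (n + 1) / (n + 1) := hpow_integral

theorem abs_iterate_Psi_le {M b : ℝ} (hM0 : 0 ≤ M) (hM : ∀ z ∈ Icc 0 b, |h z| ≤ M) (n : ℕ) :
    ∀ x ∈ Icc 0 b, |(Psi μ)^[n] h x| ≤ M * (2 * x) ^ n / n.factorial := by
  induction n with
  | zero => simpa using hM
  | succ n ih =>
    intro x hx
    have hstep := abs_Psi_le_of_abs_le_mul_pow μ (C := M * 2 ^ n / n.factorial)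
      (by positivity) hx.1 fun z hz => by
        simpa only [mul_pow, mul_div_right_comm, mul_assoc] using
          ih z ⟨hz.1, hz.2.trans hx.2⟩
    rw [Function.iterate_succ_apply']
    refine hstep.trans_eq ?_
    rw [Nat.factorial_succ]
    push_cast
    field_simp
    ring

theorem LocBdd.exists_summable_bound_pow_mul_iterate_Psi (hh : LocBdd h) {x : ℝ} (hx : 0 ≤ x)
    (R : ℝ) : ∃ B : ℕ → ℝ, Summable B ∧
      ∀ n (a : ℝ), |a| ≤ R → ‖a ^ n * (Psi μ)^[n] h x‖ ≤ B n := by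
  obtain ⟨M, hM⟩ := hh x
  refine ⟨fun n => max M 0 * ((R * (2 * x)) ^ n / n.factorial),
    (Real.summable_pow_div_factorial _).mul_left _, fun n a ha => ?_⟩
  have hiter := abs_iterate_Psi_le μ (le_max_right M 0)
    (fun z hz => (hM z hz).trans (le_max_left M 0)) n x ⟨hx, le_rfl⟩
  rw [Real.norm_eq_abs, abs_mul, abs_pow]
  calc |a| ^ n * |(Psi μ)^[n] h x| ≤ R ^ n * (max M 0 * (2 * x) ^ n / n.factorial) :=
        mul_le_mul (pow_le_pow_left₀ (abs_nonneg a) ha n) hiter (abs_nonneg _)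
          (pow_nonneg ((abs_nonneg a).trans ha) n)
    _ = max M 0 * ((R * (2 * x)) ^ n / n.factorial) := by ring

theorem LocBdd.summable_pow_mul_iterate_Psi (hh : LocBdd h) {x : ℝ} (hx : 0 ≤ x) (a : ℝ) :
    Summable fun n => a ^ n * (Psi μ)^[n] h x := by
  obtain ⟨B, hB, hbound⟩ := hh.exists_summable_bound_pow_mul_iterate_Psi μ hx |a|
  exact hB.of_norm_bounded fun n => hbound n a le_rfl

theorem LocBdd.tendsto_pow_mul_iterate_Psi (hh : LocBdd h) {x : ℝ} (hx : 0 ≤ x) (a : ℝ) :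
    Tendsto (fun n => a ^ n * (Psi μ)^[n] h x) atTop (𝓝 0) :=
  (hh.summable_pow_mul_iterate_Psi μ hx a).tendsto_atTop_zero

theorem LocBdd.tendstoUniformlyOn_sum_pow_succ_mul_iterate_Psi (hh : LocBdd h) {x : ℝ}
    (hx : 0 ≤ x) {K : Set ℝ} (hK : IsCompact K) :
    TendstoUniformlyOn
      (fun (N : ℕ) (a : ℝ) => ∑ n ∈ Finset.range N, a ^ (n + 1) * ((Psi μ)^[n] h) x)
      (fun a => ∑' n : ℕ, a ^ (n + 1) * ((Psi μ)^[n] h) x) atTop K := by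
  obtain ⟨R, hR⟩ := hK.isBounded.exists_norm_le
  obtain ⟨B, hB, hbound⟩ := hh.exists_summable_bound_pow_mul_iterate_Psi μ hx R
  refine tendstoUniformlyOn_tsum_nat (hB.mul_left R) fun n a ha => ?_
  have haR : |a| ≤ R := hR a ha
  rw [pow_succ', mul_assoc, norm_mul]
  exact mul_le_mul haR (hbound n a haR) (norm_nonneg _) ((abs_nonneg a).trans haR)

end Bounds

theorem iterate_Psi_eq_mul_add (μ : Measure ℝ) [IsProbabilityMeasure μ] {α : ℝ} {g u : ℝ → ℝ}
    (hg : Measurable g) (hgb : LocBdd g) (hu : Measurable u) (hub : LocBdd u)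
    (heq : ∀ x ≥ (0:ℝ), u x = α * (g x + Psi μ u x)) (n : ℕ) {x : ℝ} (hx : 0 ≤ x) :
    (Psi μ)^[n] u x = α * ((Psi μ)^[n] g x + (Psi μ)^[n + 1] u x) := by
  set G := (Ici (0:ℝ)).indicator g
  set U := (Ici (0:ℝ)).indicator u
  have hG := MeasurableLocBdd.indicator_Ici hg hgb
  have hU := MeasurableLocBdd.indicator_Ici hu hub
  have hUeq : EqOn U (fun y => α * (G y + Psi μ U y)) (Ici 0) := fun y hy => by
    show U y = α * (G y + Psi μ U y)
    rw [show Psi μ U y = Psi μ u y from iterate_Psi_indicator_Ici μ 1 hy]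
    simp only [U, G, indicator_of_mem hy]
    exact heq y hy
  rw [← iterate_Psi_indicator_Ici μ n hx, iterate_Psi_eqOn μ hUeq n hx,
    iterate_Psi_mul_add μ hG (measurableLocBdd_Psi μ hU),
    ← iterate_Psi_indicator_Ici μ n (h := g) hx,
    ← iterate_Psi_indicator_Ici μ (n + 1) (h := u) hx]
  rfl

theorem solution_series_general (μ : Measure ℝ) [IsProbabilityMeasure μ]
    (α : ℝ)
    (g : ℝ → ℝ) (hg : Measurable g) (hgb : LocBdd g)
    (u : ℝ → ℝ) (hu : Measurable u) (hub : LocBdd u)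
    (heq : ∀ x ≥ (0:ℝ), u x = α * (g x + Psi μ u x)) :
    (∀ x ≥ (0:ℝ), HasSum (fun n : ℕ => α ^ (n + 1) * ((Psi μ)^[n] g) x) (u x)) ∧
      ∀ x ≥ (0:ℝ), ∀ K : Set ℝ, IsCompact K →
        TendstoUniformlyOn
          (fun (N : ℕ) (a : ℝ) => ∑ n ∈ Finset.range N, a ^ (n + 1) * ((Psi μ)^[n] g) x)
          (fun a => ∑' n : ℕ, a ^ (n + 1) * ((Psi μ)^[n] g) x) atTop K := by
  refine ⟨fun x hx => ?_, fun x hx K hK =>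
    hgb.tendstoUniformlyOn_sum_pow_succ_mul_iterate_Psi μ hx hK⟩
  have hsum : Summable fun n => α ^ (n + 1) * (Psi μ)^[n] g x := by
    simpa only [pow_succ', mul_assoc] using (hgb.summable_pow_mul_iterate_Psi μ hx α).mul_left α
  have hpartial (N : ℕ) : ∑ n ∈ Finset.range N, α ^ (n + 1) * (Psi μ)^[n] g x =
      u x - α ^ N * (Psi μ)^[N] u x :=
    eq_sub_of_add_eq (eq_sum_add_pow_mul_of_eq_mul_add
      (fun n => iterate_Psi_eq_mul_add μ hg hgb hu hub heq n hx) N).symm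
  rw [hsum.hasSum_iff_tendsto_nat, funext hpartial]
  simpa using tendsto_const_nhds.sub (hub.tendsto_pow_mul_iterate_Psi μ hx α)

/-- the unique solution `u_{α,g}` of `u = α(g + Ψ_F u)` admits the series
representation `u_{α,g}(x) = Σ_{n≥0} α^{n+1} (Ψ_Fⁿ g)(x)` for every `x ≥ 0`, and for each
fixed `x` the series converges uniformly with respect to `α` on compact intervals of `ℝ`. -/
theorem solution_series (μ : Measure ℝ) [IsProbabilityMeasure μ]
    (hμ0 : μ (Iic 0) = 0) (α : ℝ)
    (g : ℝ → ℝ) (hg : Measurable g) (hgb : LocBdd g)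
    (u : ℝ → ℝ) (hu : Measurable u) (hub : LocBdd u)
    (heq : ∀ x ≥ (0:ℝ), u x = α * (g x + Psi μ u x)) :
    (∀ x ≥ (0:ℝ), HasSum (fun n : ℕ => α ^ (n + 1) * ((Psi μ)^[n] g) x) (u x)) ∧
      ∀ x ≥ (0:ℝ), ∀ K : Set ℝ, IsCompact K →
        TendstoUniformlyOn
          (fun (N : ℕ) (a : ℝ) => ∑ n ∈ Finset.range N, a ^ (n + 1) * ((Psi μ)^[n] g) x)
          (fun a => ∑' n : ℕ, a ^ (n + 1) * ((Psi μ)^[n] g) x) atTop K :=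
  solution_series_general μ α g hg hgb u hu hub heq
end

section
/- Let F be the distribution function of a probability measure on [0,∞) with F(0)=0, let Ψ_F be the compounding operator, and let g : [0,∞) → ℝ be measurable and locally bounded. Then for every fixed x ≥ 0 the map α ↦ u_{α,g}(x) is differentiable on (0,∞) and its derivative satisfies d/dα u_{α,g}(x) = (1/α²) · u_{α, u_{α,g}}(x), where u_{α, u_{α,g}} is the unique solution of v = α(u_{α,g} + Ψ_F v). -/
open MeasureTheory Set Filter

/-!
Put `e = (b - a) / a²`. By linearity of `Ψ_F`, the remainder `w = u_b - u_a - e · v_a` of the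
first-order expansion solves `w = b Ψ_F w + ((b - a)² / a²) Ψ_F v_a` on `[0, x]`. Since
`|Ψ_F h (z)| ≤ 2 ∫₀ᶻ sup_{[0,s]} |h| ds`, Picard iteration gives the Gronwall bound
`|w x| ≤ sup |r| · exp (2 |b| x)` for solutions of `w = b Ψ_F w + r`, so `w x = O((b - a)²)`.
-/

namespace LocBdd

lemma sub {h₁ h₂ : ℝ → ℝ} (hb₁ : LocBdd h₁) (hb₂ : LocBdd h₂) :
    LocBdd (fun t => h₁ t - h₂ t) := by
  intro x
  obtain ⟨M₁, hM₁⟩ := hb₁ x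
  obtain ⟨M₂, hM₂⟩ := hb₂ x
  exact ⟨M₁ + M₂, fun z hz => (abs_sub _ _).trans (add_le_add (hM₁ z hz) (hM₂ z hz))⟩

lemma const_mul {h : ℝ → ℝ} (hb : LocBdd h) (c : ℝ) : LocBdd (fun t => c * h t) := by
  intro x
  obtain ⟨M, hM⟩ := hb x
  exact ⟨|c| * M, fun z hz =>
    (abs_mul c _).trans_le (mul_le_mul_of_nonneg_left (hM z hz) (abs_nonneg c))⟩

end LocBdd

section Psi

variable {μ : Measure ℝ}

noncomputable def convIcc (μ : Measure ℝ) (h : ℝ → ℝ) (z : ℝ) : ℝ :=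
  ∫ y in Icc (0:ℝ) z, h (z - y) ∂μ

lemma Psi_eq_integral_sub_convIcc (h : ℝ → ℝ) (x : ℝ) :
    Psi μ h x = ∫ z in (0:ℝ)..x, (h z - convIcc μ h z) := rfl

lemma measurable_convIcc [SFinite μ] {h : ℝ → ℝ} (hh : Measurable h) :
    Measurable (convIcc μ h) := by
  let S : Set (ℝ × ℝ) := {p | 0 ≤ p.2 ∧ p.2 ≤ p.1}
  have hS : MeasurableSet S :=
    (measurableSet_le measurable_const measurable_snd).inter
      (measurableSet_le measurable_snd measurable_fst)
  have hf : StronglyMeasurable (S.indicator fun p : ℝ × ℝ => h (p.1 - p.2)) :=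
    ((hh.comp (measurable_fst.sub measurable_snd)).indicator hS).stronglyMeasurable
  have hconv : convIcc μ h = fun z => ∫ y, S.indicator (fun p => h (p.1 - p.2)) (z, y) ∂μ := by
    ext z
    rw [convIcc, ← integral_indicator measurableSet_Icc]
    rfl
  rw [hconv]
  exact hf.integral_prod_right'.measurable

lemma abs_convIcc_le [IsZeroOrProbabilityMeasure μ] {h : ℝ → ℝ} {z B : ℝ} (hz : 0 ≤ z)
    (hB : ∀ t ∈ Icc 0 z, |h t| ≤ B) : |convIcc μ h z| ≤ B := by
  have hB₀ : 0 ≤ B := (abs_nonneg _).trans (hB 0 ⟨le_rfl, hz⟩)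
  have hshift : ∀ y ∈ Icc 0 z, ‖h (z - y)‖ ≤ B := fun y hy =>
    hB (z - y) ⟨by linarith [hy.2], by linarith [hy.1]⟩
  calc |convIcc μ h z| ≤ B * μ.real (Icc 0 z) :=
        norm_setIntegral_le_of_norm_le_const (measure_lt_top _ _) hshift
    _ ≤ B := mul_le_of_le_one_right hB₀ measureReal_le_one

lemma integrableOn_comp_const_sub [IsFiniteMeasure μ] {h : ℝ → ℝ} {z B : ℝ} (hh : Measurable h)
    (hB : ∀ t ∈ Icc 0 z, |h t| ≤ B) : IntegrableOn (fun y => h (z - y)) (Icc 0 z) μ := by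
  refine .of_bound (measure_lt_top _ _)
    (hh.comp (measurable_const.sub measurable_id)).aestronglyMeasurable B ?_
  filter_upwards [ae_restrict_mem measurableSet_Icc] with y hy
  exact hB (z - y) ⟨by linarith [hy.2], by linarith [hy.1]⟩

lemma intervalIntegrable_sub_convIcc [IsZeroOrProbabilityMeasure μ] {h : ℝ → ℝ} {x M : ℝ}
    (hh : Measurable h) (hx : 0 ≤ x) (hM : ∀ t ∈ Icc 0 x, |h t| ≤ M) :
    IntervalIntegrable (fun z => h z - convIcc μ h z) volume 0 x := by
  rw [intervalIntegrable_iff_integrableOn_Ioc_of_le hx]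
  refine .of_bound measure_Ioc_lt_top (hh.sub (measurable_convIcc hh)).aestronglyMeasurable
    (M + M) ?_
  filter_upwards [ae_restrict_mem measurableSet_Ioc] with z hz
  have hMz : ∀ t ∈ Icc 0 z, |h t| ≤ M := fun t ht => hM t ⟨ht.1, ht.2.trans hz.2⟩
  exact (abs_sub _ _).trans (add_le_add (hMz z ⟨hz.1.le, le_rfl⟩) (abs_convIcc_le hz.1.le hMz))

lemma Psi_sub [IsZeroOrProbabilityMeasure μ] {h₁ h₂ : ℝ → ℝ} {x : ℝ}
    (hh₁ : Measurable h₁) (hh₂ : Measurable h₂) (hb₁ : LocBdd h₁) (hb₂ : LocBdd h₂)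
    (hx : 0 ≤ x) :
    Psi μ (fun t => h₁ t - h₂ t) x = Psi μ h₁ x - Psi μ h₂ x := by
  obtain ⟨M₁, hM₁⟩ := hb₁ x
  obtain ⟨M₂, hM₂⟩ := hb₂ x
  simp only [Psi_eq_integral_sub_convIcc]
  rw [← intervalIntegral.integral_sub (intervalIntegrable_sub_convIcc hh₁ hx hM₁)
    (intervalIntegrable_sub_convIcc hh₂ hx hM₂)]
  refine intervalIntegral.integral_congr fun z hz => ?_
  rw [uIcc_of_le hx] at hz
  have hconv : convIcc μ (fun t => h₁ t - h₂ t) z = convIcc μ h₁ z - convIcc μ h₂ z :=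
    integral_sub
      (integrableOn_comp_const_sub hh₁ fun t ht => hM₁ t ⟨ht.1, ht.2.trans hz.2⟩)
      (integrableOn_comp_const_sub hh₂ fun t ht => hM₂ t ⟨ht.1, ht.2.trans hz.2⟩)
  simp only [hconv]
  ring

lemma Psi_const_mul (h : ℝ → ℝ) (c x : ℝ) :
    Psi μ (fun t => c * h t) x = c * Psi μ h x := by
  simp only [Psi_eq_integral_sub_convIcc, convIcc, integral_const_mul, ← mul_sub]
  exact intervalIntegral.integral_const_mul c _

lemma abs_Psi_le_two_mul_integral [IsZeroOrProbabilityMeasure μ] {h φ : ℝ → ℝ} {z : ℝ}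
    (hz : 0 ≤ z) (hφ : MonotoneOn φ (Icc 0 z)) (hφi : IntervalIntegrable φ volume 0 z)
    (hhφ : ∀ t ∈ Icc 0 z, |h t| ≤ φ t) :
    |Psi μ h z| ≤ 2 * ∫ s in (0:ℝ)..z, φ s := by
  rw [← intervalIntegral.integral_const_mul, ← Real.norm_eq_abs, Psi_eq_integral_sub_convIcc]
  refine intervalIntegral.norm_integral_le_of_norm_le hz (.of_forall fun s hs => ?_)
    (hφi.const_mul 2)
  have hsz : s ∈ Icc 0 z := ⟨hs.1.le, hs.2⟩
  have hhs : ∀ t ∈ Icc 0 s, |h t| ≤ φ s := fun t ht =>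
    (hhφ t ⟨ht.1, ht.2.trans hs.2⟩).trans (hφ ⟨ht.1, ht.2.trans hs.2⟩ hsz ht.2)
  calc ‖h s - convIcc μ h s‖ ≤ |h s| + |convIcc μ h s| := abs_sub _ _
    _ ≤ φ s + φ s := add_le_add (hhφ s hsz) (abs_convIcc_le hs.1.le hhs)
    _ = 2 * φ s := by ring

lemma abs_Psi_le [IsZeroOrProbabilityMeasure μ] {h : ℝ → ℝ} {z M : ℝ} (hz : 0 ≤ z)
    (hM : ∀ t ∈ Icc 0 z, |h t| ≤ M) : |Psi μ h z| ≤ 2 * M * z := by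
  have := abs_Psi_le_two_mul_integral (μ := μ) hz monotoneOn_const intervalIntegrable_const hM
  rwa [intervalIntegral.integral_const, smul_eq_mul, sub_zero, mul_comm z, ← mul_assoc] at this

end Psi

lemma abs_le_mul_exp_of_abs_le_add_integral {w : ℝ → ℝ} {x K R c : ℝ} (hx : 0 ≤ x) (hR : 0 ≤ R)
    (hc : 0 ≤ c) (hK : ∀ t ∈ Icc 0 x, |w t| ≤ K)
    (hstep : ∀ φ : ℝ → ℝ, Continuous φ → MonotoneOn φ (Icc 0 x) →
      (∀ t ∈ Icc 0 x, |w t| ≤ φ t) → ∀ z ∈ Icc 0 x, |w z| ≤ R + c * ∫ s in (0:ℝ)..z, φ s) :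
    |w x| ≤ R * Real.exp (c * x) := by
  have hK₀ : 0 ≤ K := (abs_nonneg _).trans (hK 0 ⟨le_rfl, hx⟩)
  let φ (n : ℕ) (s : ℝ) : ℝ := R * Real.exp (c * s) + K * (c * s) ^ n / n.factorial
  have hcont (n : ℕ) : Continuous (φ n) := by fun_prop
  have hmono (n : ℕ) : MonotoneOn (φ n) (Icc 0 x) := fun s hs t _ hst => by
    have : 0 ≤ c * s := mul_nonneg hc hs.1
    dsimp only [φ]
    gcongr
  have hderiv (n : ℕ) (s : ℝ) : HasDerivAt (φ (n + 1)) (c * φ n s) s := by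
    have hlin : HasDerivAt (fun s => c * s) c s := by simpa using (hasDerivAt_id s).const_mul c
    refine ((hlin.exp.const_mul R).add (((hlin.pow (n + 1)).const_mul K).div_const
      ((n + 1).factorial : ℝ))).congr_deriv ?_
    simp only [φ, Nat.factorial_succ, Nat.cast_mul, Nat.cast_succ, Nat.add_sub_cancel]
    field_simp
  have hpicard (n : ℕ) (z : ℝ) : R + c * ∫ s in (0:ℝ)..z, φ n s = φ (n + 1) z := by
    rw [← intervalIntegral.integral_const_mul, intervalIntegral.integral_eq_sub_of_hasDerivAt
      (fun s _ => hderiv n s) ((continuous_const.mul (hcont n)).intervalIntegrable 0 z)]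
    simp [φ]
  have hbound (n : ℕ) : ∀ z ∈ Icc 0 x, |w z| ≤ φ n z := by
    induction n with
    | zero =>
      intro z hz
      refine (hK z hz).trans ?_
      simp only [φ, pow_zero, mul_one, Nat.factorial_zero, Nat.cast_one, div_one,
        le_add_iff_nonneg_left]
      positivity
    | succ n ih => exact fun z hz => (hstep _ (hcont n) (hmono n) ih z hz).trans_eq (hpicard n z)
  have hlim : Tendsto (fun n => φ n x) atTop (nhds (R * Real.exp (c * x))) := by
    have := (FloorSemiring.tendsto_pow_div_factorial_atTop (c * x)).const_mul K
    simpa [φ, mul_div_assoc] using this.const_add (R * Real.exp (c * x))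
  exact ge_of_tendsto' hlim fun n => hbound n x ⟨hx, le_rfl⟩

lemma abs_le_mul_exp_of_eq_mul_Psi_add {μ : Measure ℝ} [IsZeroOrProbabilityMeasure μ]
    {w r : ℝ → ℝ} {b x R : ℝ} (hwb : LocBdd w) (hx : 0 ≤ x) (hR : 0 ≤ R)
    (heq : ∀ z ∈ Icc 0 x, w z = b * Psi μ w z + r z) (hr : ∀ z ∈ Icc 0 x, |r z| ≤ R) :
    |w x| ≤ R * Real.exp (2 * |b| * x) := by
  obtain ⟨K, hK⟩ := hwb x
  refine abs_le_mul_exp_of_abs_le_add_integral hx hR (by positivity) hK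
    fun φ hφc hφm hwφ z hz => ?_
  have hzx : Icc 0 z ⊆ Icc 0 x := Icc_subset_Icc_right hz.2
  have hPsi := abs_Psi_le_two_mul_integral (μ := μ) hz.1 (hφm.mono hzx)
    (hφc.intervalIntegrable 0 z) fun t ht => hwφ t (hzx ht)
  calc |w z| = |b * Psi μ w z + r z| := by rw [← heq z hz]
    _ ≤ |b| * |Psi μ w z| + R := by
      rw [← abs_mul]
      exact (abs_add_le _ _).trans (add_le_add_right (hr z hz) _)
    _ ≤ |b| * (2 * ∫ s in (0:ℝ)..z, φ s) + R := by gcongr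
    _ = R + 2 * |b| * ∫ s in (0:ℝ)..z, φ s := by ring

/-- `IsSolution μ α g u` says that `u` is the solution `u_{α,g}`. -/
def IsSolution (μ : Measure ℝ) (α : ℝ) (g u : ℝ → ℝ) : Prop :=
  Measurable u ∧ LocBdd u ∧ ∀ x ≥ (0:ℝ), u x = α * (g x + Psi μ u x)

namespace IsSolution

variable {μ : Measure ℝ} [IsZeroOrProbabilityMeasure μ] {g uₐ u_b vₐ : ℝ → ℝ} {a b : ℝ}

lemma sub_sub_eq (hu : IsSolution μ a g uₐ) (hub : IsSolution μ b g u_b)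
    (hv : IsSolution μ a uₐ vₐ) (ha : a ≠ 0) {z : ℝ} (hz : 0 ≤ z) :
    u_b z - uₐ z - (b - a) / a ^ 2 * vₐ z =
      b * Psi μ (fun t => u_b t - uₐ t - (b - a) / a ^ 2 * vₐ t) z +
        (b - a) ^ 2 / a ^ 2 * Psi μ vₐ z := by
  rw [Psi_sub (h₁ := fun t => u_b t - uₐ t) (hub.1.sub hu.1) (hv.1.const_mul _)
      (hub.2.1.sub hu.2.1) (hv.2.1.const_mul _) hz,
    Psi_sub hub.1 hu.1 hub.2.1 hu.2.1 hz, Psi_const_mul, hub.2.2 z hz, hv.2.2 z hz, hu.2.2 z hz]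
  field_simp
  ring

lemma abs_sub_sub_le (hu : IsSolution μ a g uₐ) (hub : IsSolution μ b g u_b)
    (hv : IsSolution μ a uₐ vₐ) (ha : a ≠ 0) {x M : ℝ} (hx : 0 ≤ x)
    (hM : ∀ t ∈ Icc 0 x, |vₐ t| ≤ M) :
    |u_b x - uₐ x - (b - a) / a ^ 2 * vₐ x| ≤
      (b - a) ^ 2 / a ^ 2 * (2 * M * x) * Real.exp (2 * |b| * x) := by
  have hM₀ : 0 ≤ M := (abs_nonneg _).trans (hM 0 ⟨le_rfl, hx⟩)
  refine abs_le_mul_exp_of_eq_mul_Psi_add ((hub.2.1.sub hu.2.1).sub (hv.2.1.const_mul _)) hx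
    (by positivity) (fun z hz => sub_sub_eq hu hub hv ha hz.1) fun z hz => ?_
  have hPsi : |Psi μ vₐ z| ≤ 2 * M * x :=
    (abs_Psi_le hz.1 fun t ht => hM t ⟨ht.1, ht.2.trans hz.2⟩).trans (by gcongr; exact hz.2)
  rw [abs_mul, abs_of_nonneg (by positivity)]
  gcongr

end IsSolution

lemma hasDerivAt_of_abs_sub_sub_le_sq {f : ℝ → ℝ} {f' a C δ : ℝ} (hδ : 0 < δ)
    (h : ∀ b, |b - a| ≤ δ → |f b - f a - (b - a) * f'| ≤ C * (b - a) ^ 2) :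
    HasDerivAt f f' a := by
  rw [hasDerivAt_iff_isLittleO]
  refine Asymptotics.IsBigO.trans_isLittleO (g := fun b => ‖b - a‖ ^ 2) ?_
    (Asymptotics.isLittleO_pow_sub_sub a one_lt_two)
  refine Asymptotics.IsBigO.of_bound C ?_
  filter_upwards [Metric.closedBall_mem_nhds a hδ] with b hb
  simpa [smul_eq_mul, mul_comm f'] using h b hb

theorem solution_hasDerivAt_general (μ : Measure ℝ) [IsProbabilityMeasure μ]
    (g : ℝ → ℝ)
    (u v : ℝ → ℝ → ℝ)
    (hu : ∀ a : ℝ, Measurable (u a) ∧ LocBdd (u a) ∧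
      ∀ x ≥ (0:ℝ), u a x = a * (g x + Psi μ (u a) x))
    (hv : ∀ a : ℝ, Measurable (v a) ∧ LocBdd (v a) ∧
      ∀ x ≥ (0:ℝ), v a x = a * (u a x + Psi μ (v a) x)) :
    ∀ x ≥ (0:ℝ), ∀ a : ℝ, 0 < a →
      HasDerivAt (fun b => u b x) (1 / a ^ 2 * v a x) a := by
  intro x hx a ha
  obtain ⟨M, hM⟩ := (hv a).2.1 x
  have hM₀ : 0 ≤ M := (abs_nonneg _).trans (hM 0 ⟨le_rfl, hx⟩)
  refine hasDerivAt_of_abs_sub_sub_le_sq zero_lt_one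
    (C := 2 * M * x / a ^ 2 * Real.exp (2 * (|a| + 1) * x)) fun b hb => ?_
  have hb' : |b| ≤ |a| + 1 := by linarith [abs_sub_abs_le_abs_sub b a]
  calc |u b x - u a x - (b - a) * (1 / a ^ 2 * v a x)|
      = |u b x - u a x - (b - a) / a ^ 2 * v a x| := by ring_nf
    _ ≤ (b - a) ^ 2 / a ^ 2 * (2 * M * x) * Real.exp (2 * |b| * x) :=
      IsSolution.abs_sub_sub_le (hu a) (hu b) (hv a) ha.ne' hx hM
    _ ≤ (b - a) ^ 2 / a ^ 2 * (2 * M * x) * Real.exp (2 * (|a| + 1) * x) := by gcongr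
    _ = 2 * M * x / a ^ 2 * Real.exp (2 * (|a| + 1) * x) * (b - a) ^ 2 := by ring

/-- for every fixed `x ≥ 0` the map `α ↦ u_{α,g}(x)` is differentiable on
`(0,∞)` with derivative `(1/α²) · u_{α,u_{α,g}}(x)`, where `u_{α,g}` denotes the (unique)
measurable locally bounded solution of `u = α(g + Ψ_F u)` and `u_{α,u_{α,g}}` the one of
`v = α(u_{α,g} + Ψ_F v)`. -/
theorem solution_hasDerivAt (μ : Measure ℝ) [IsProbabilityMeasure μ]
    (hμ0 : μ (Iic 0) = 0)
    (g : ℝ → ℝ) (hg : Measurable g) (hgb : LocBdd g)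
    (u v : ℝ → ℝ → ℝ)
    (hu : ∀ a : ℝ, Measurable (u a) ∧ LocBdd (u a) ∧
      ∀ x ≥ (0:ℝ), u a x = a * (g x + Psi μ (u a) x))
    (hv : ∀ a : ℝ, Measurable (v a) ∧ LocBdd (v a) ∧
      ∀ x ≥ (0:ℝ), v a x = a * (u a x + Psi μ (v a) x)) :
    ∀ x ≥ (0:ℝ), ∀ a : ℝ, 0 < a →
      HasDerivAt (fun b => u b x) (1 / a ^ 2 * v a x) a :=
  solution_hasDerivAt_general μ g u v hu hv
end

section
/- Let F be the distribution function of a probability measure on [0,∞) with F(0)=0, and let Ψ_F be the compounding operator. If h : [0,∞) → ℝ is continuous with h(z) > 0 for all z ≥ 0, then (Ψ_Fⁿ h)(x) > 0 for every n ∈ ℕ and every x > 0, and consequently u_{α,h}(x) > 0 for every α > 0 and every x ≥ 0. -/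
open MeasureTheory Set Filter

/-!
Extend functions on `[0,∞)` by zero to the left of `0`. By Fubini,
`(Ψ_F g)(x) = ∫ (∫₀ˣ (g(z) - g(z - y)) dz) dF(y) = ∫ (∫_{x-y}^x g) dF(y)`,
which is positive as soon as `g` is positive on `(0, x)`, because `F` puts no mass on `(-∞, 0]`.
Iterating gives the first claim. For the second, `u - αh = αΨ_F u` is continuous with
`u(0) = αh(0) > 0`; at the first zero `x₀` of `h + Ψ_F u` the function `u` is positive on
`[0, x₀)`, hence `(Ψ_F u)(x₀) > 0` and `h(x₀) + (Ψ_F u)(x₀) > 0`, a contradiction.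
-/

lemma ContinuousOn.locBdd {g : ℝ → ℝ} (hg : ContinuousOn g (Ici 0)) : LocBdd g := fun x => by
  obtain ⟨M, hM⟩ := isCompact_Icc.exists_bound_of_continuousOn (hg.mono Icc_subset_Ici_self)
  exact ⟨M, fun z hz => by simpa only [Real.norm_eq_abs] using hM z hz⟩

lemma intervalIntegrable_of_abs_le {f : ℝ → ℝ} (hf : AEStronglyMeasurable f) {a b M : ℝ}
    (hM : ∀ z ∈ uIoc a b, |f z| ≤ M) : IntervalIntegrable f volume a b :=
  intervalIntegrable_const.mono_fun' hf.restrict (ae_restrict_of_forall_mem measurableSet_uIoc hM)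

lemma intervalIntegral_eq_zero_of_nonpos {f : ℝ → ℝ} (hf : ∀ z < 0, f z = 0) {a b : ℝ}
    (ha : a ≤ 0) (hb : b ≤ 0) : ∫ z in a..b, f z = 0 := by
  have hf0 : ∀ᵐ z, z ∈ uIoc a b → f z = 0 := by
    filter_upwards [Measure.ae_ne volume 0] with z hz0 hz
    exact hf z (lt_of_le_of_ne (hz.2.trans (max_le ha hb)) hz0)
  simp [intervalIntegral.integral_congr_ae hf0]

lemma integral_pos_of_ae_pos {α : Type*} [MeasurableSpace α] {μ : Measure α} [NeZero μ]
    {f : α → ℝ} (hfi : Integrable f μ) (hf : ∀ᵐ x ∂μ, 0 < f x) : 0 < ∫ x, f x ∂μ := by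
  rw [integral_pos_iff_support_of_nonneg_ae (hf.mono fun _ hx => hx.le) hfi, pos_iff_ne_zero]
  intro hsupp
  obtain ⟨x, hx, hx0⟩ := (hf.and (measure_eq_zero_iff_ae_notMem.1 hsupp)).exists
  exact hx0 hx.ne'

lemma ae_pos_of_measure_Iic_zero {μ : Measure ℝ} (hμ0 : μ (Iic 0) = 0) : ∀ᵐ y ∂μ, 0 < y := by
  rw [ae_iff]
  simp only [not_lt]
  exact hμ0

lemma abs_integral_comp_sub_le {μ : Measure ℝ} [IsProbabilityMeasure μ] (hμ0 : μ (Iic 0) = 0)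
    {g : ℝ → ℝ} {z M : ℝ} (hM : ∀ t ≤ z, |g t| ≤ M) : |∫ y, g (z - y) ∂μ| ≤ M := by
  have hbound : ∀ᵐ y ∂μ, ‖g (z - y)‖ ≤ M := by
    filter_upwards [ae_pos_of_measure_Iic_zero hμ0] with y hy
    exact hM _ (by linarith)
  simpa using norm_integral_le_of_norm_le_const hbound

lemma measurable_integral_comp_sub {μ : Measure ℝ} [SFinite μ] {g : ℝ → ℝ} (hg : Measurable g) :
    Measurable fun z => ∫ y, g (z - y) ∂μ :=
  (hg.comp (measurable_fst.sub measurable_snd)).stronglyMeasurable.integral_prod_right'.measurable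

lemma psi_eqOn {μ : Measure ℝ} {f g : ℝ → ℝ} (hfg : EqOn f g (Ici 0)) :
    EqOn (Psi μ f) (Psi μ g) (Ici 0) := by
  intro x hx
  refine intervalIntegral.integral_congr fun z hz => ?_
  rw [uIcc_of_le hx] at hz
  rw [hfg hz.1, setIntegral_congr_fun measurableSet_Icc fun y hy =>
    hfg (show 0 ≤ z - y by linarith [hy.2])]

lemma iterate_psi_eqOn {μ : Measure ℝ} {f g : ℝ → ℝ} (hfg : EqOn f g (Ici 0)) (n : ℕ) :
    EqOn ((Psi μ)^[n] f) ((Psi μ)^[n] g) (Ici 0) := by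
  induction n with
  | zero => exact hfg
  | succ n ih =>
    simp only [Function.iterate_succ_apply']
    exact psi_eqOn ih

/-- A measurable, locally bounded function on `[0,∞)`, extended by zero to `ℝ`. -/
structure Causal (g : ℝ → ℝ) : Prop where
  measurable : Measurable g
  eq_zero_of_neg : ∀ z < 0, g z = 0
  locBdd : LocBdd g

namespace Causal

variable {g : ℝ → ℝ}

lemma indicator_Ici (hm : Measurable ((Ici 0).indicator g)) (hg : LocBdd g) :
    Causal ((Ici 0).indicator g) where
  measurable := hm
  eq_zero_of_neg z hz := indicator_of_notMem (not_le.2 hz) g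
  locBdd x := by
    obtain ⟨M, hM⟩ := hg x
    exact ⟨M, fun z hz => by simpa only [indicator_of_mem (mem_Ici.2 hz.1)] using hM z hz⟩

lemma indicator_Ici_of_continuousOn (hg : ContinuousOn g (Ici 0)) :
    Causal ((Ici 0).indicator g) := by
  classical
  refine indicator_Ici ?_ hg.locBdd
  rw [← piecewise_eq_indicator]
  exact hg.measurable_piecewise continuousOn_const measurableSet_Ici

lemma exists_bound_Iic (hg : Causal g) (x : ℝ) : ∃ M, ∀ z ≤ x, |g z| ≤ M := by
  obtain ⟨M, hM⟩ := hg.locBdd x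
  refine ⟨max M 0, fun z hz => ?_⟩
  rcases lt_or_ge z 0 with hz0 | hz0
  · simp [hg.eq_zero_of_neg z hz0]
  · exact (hM z ⟨hz0, hz⟩).trans (le_max_left _ _)

lemma comp_sub (hg : Causal g) {y : ℝ} (hy : 0 ≤ y) : Causal fun z => g (z - y) where
  measurable := hg.measurable.comp (measurable_id.sub_const y)
  eq_zero_of_neg z hz := hg.eq_zero_of_neg _ (by linarith)
  locBdd x := by
    obtain ⟨M, hM⟩ := hg.exists_bound_Iic x
    exact ⟨M, fun z hz => hM _ (by linarith [hz.2])⟩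

lemma intervalIntegrable (hg : Causal g) (a b : ℝ) : IntervalIntegrable g volume a b := by
  obtain ⟨M, hM⟩ := hg.exists_bound_Iic (max a b)
  exact intervalIntegrable_of_abs_le hg.measurable.aestronglyMeasurable fun z hz => hM z hz.2

variable {μ : Measure ℝ}

lemma psi_eq (hg : Causal g) (hμ0 : μ (Iic 0) = 0) :
    Psi μ g = fun x => ∫ z in 0..x, (g z - ∫ y, g (z - y) ∂μ) := by
  funext x
  refine intervalIntegral.integral_congr fun z _ => ?_
  rw [setIntegral_eq_integral_of_ae_compl_eq_zero]
  filter_upwards [ae_pos_of_measure_Iic_zero hμ0] with y hy hyz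
  exact hg.eq_zero_of_neg _ (by linarith [not_le.1 fun h => hyz ⟨hy.le, h⟩])

section Finite

variable [IsFiniteMeasure μ]

lemma integrable_comp_sub (hg : Causal g) (hμ0 : μ (Iic 0) = 0) (z : ℝ) :
    Integrable (fun y => g (z - y)) μ := by
  obtain ⟨M, hM⟩ := hg.exists_bound_Iic z
  refine Integrable.mono' (integrable_const M)
    (hg.measurable.comp (measurable_const.sub measurable_id)).aestronglyMeasurable ?_
  filter_upwards [ae_pos_of_measure_Iic_zero hμ0] with y hy
  exact hM _ (by linarith)

lemma integrable_prod (hg : Causal g) (hμ0 : μ (Iic 0) = 0) (x : ℝ) :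
    Integrable (fun p : ℝ × ℝ => g p.1 - g (p.1 - p.2)) ((volume.restrict (Ioc 0 x)).prod μ) := by
  obtain ⟨M, hM⟩ := hg.exists_bound_Iic x
  refine Integrable.mono' (integrable_const (M + M))
    ((hg.measurable.comp measurable_fst).sub
      (hg.measurable.comp (measurable_fst.sub measurable_snd))).aestronglyMeasurable ?_
  filter_upwards [Measure.quasiMeasurePreserving_fst.ae (ae_restrict_mem measurableSet_Ioc),
    Measure.quasiMeasurePreserving_snd.ae (ae_pos_of_measure_Iic_zero hμ0)] with p hz hy
  calc ‖g p.1 - g (p.1 - p.2)‖ ≤ |g p.1| + |g (p.1 - p.2)| := abs_sub _ _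
    _ ≤ M + M := add_le_add (hM _ hz.2) (hM _ (by linarith [hz.2]))

end Finite

variable [IsProbabilityMeasure μ]

lemma intervalIntegrable_psi_integrand (hg : Causal g) (hμ0 : μ (Iic 0) = 0) (a b : ℝ) :
    IntervalIntegrable (fun z => g z - ∫ y, g (z - y) ∂μ) volume a b := by
  obtain ⟨M, hM⟩ := hg.exists_bound_Iic (max a b)
  refine intervalIntegrable_of_abs_le (M := M + M)
    (hg.measurable.sub (measurable_integral_comp_sub hg.measurable)).aestronglyMeasurable
    fun z hz => ?_
  calc |g z - ∫ y, g (z - y) ∂μ| ≤ |g z| + |∫ y, g (z - y) ∂μ| := abs_sub _ _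
    _ ≤ M + M := add_le_add (hM z hz.2)
      (abs_integral_comp_sub_le hμ0 fun t ht => hM t (ht.trans hz.2))

lemma continuous_psi (hg : Causal g) (hμ0 : μ (Iic 0) = 0) : Continuous (Psi μ g) := by
  rw [hg.psi_eq hμ0]
  exact intervalIntegral.continuous_primitive (hg.intervalIntegrable_psi_integrand hμ0) 0

lemma psi (hg : Causal g) (hμ0 : μ (Iic 0) = 0) : Causal (Psi μ g) where
  measurable := (hg.continuous_psi hμ0).measurable
  eq_zero_of_neg x hx := by
    rw [hg.psi_eq hμ0]
    refine intervalIntegral_eq_zero_of_nonpos (fun z hz => ?_) le_rfl hx.le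
    have hconv : ∫ y, g (z - y) ∂μ = 0 := integral_eq_zero_of_ae <| by
      filter_upwards [ae_pos_of_measure_Iic_zero hμ0] with y hy
      exact hg.eq_zero_of_neg _ (by linarith)
    rw [hg.eq_zero_of_neg z hz, hconv, sub_zero]
  locBdd := (hg.continuous_psi hμ0).continuousOn.locBdd

lemma iterate_psi (hg : Causal g) (hμ0 : μ (Iic 0) = 0) (n : ℕ) : Causal ((Psi μ)^[n] g) := by
  induction n with
  | zero => exact hg
  | succ n ih =>
    rw [Function.iterate_succ_apply']
    exact ih.psi hμ0

lemma psi_eq_integral_integral (hg : Causal g) (hμ0 : μ (Iic 0) = 0) {x : ℝ} (hx : 0 ≤ x) :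
    Psi μ g x = ∫ y, (∫ z in 0..x, (g z - g (z - y))) ∂μ := by
  have hconst : ∀ z, g z - ∫ y, g (z - y) ∂μ = ∫ y, (g z - g (z - y)) ∂μ := fun z => by
    rw [integral_sub (integrable_const _) (hg.integrable_comp_sub hμ0 z), integral_const,
      probReal_univ, one_smul]
  simp only [hg.psi_eq hμ0, hconst, intervalIntegral.integral_of_le hx]
  exact integral_integral_swap (f := fun z y => g z - g (z - y)) (hg.integrable_prod hμ0 x)

lemma integral_sub_comp_sub_pos (hg : Causal g) {x y : ℝ} (hpos : ∀ z ∈ Ioo 0 x, 0 < g z)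
    (hx : 0 < x) (hy : 0 < y) : 0 < ∫ z in 0..x, (g z - g (z - y)) := by
  have hshift : ∫ z in 0..x, g (z - y) = ∫ z in -y..x - y, g z := by
    rw [intervalIntegral.integral_comp_sub_right (fun z => g z) y, zero_sub]
  rw [intervalIntegral.integral_sub (hg.intervalIntegrable 0 x)
    ((hg.comp_sub hy.le).intervalIntegrable 0 x), hshift]
  rcases le_or_gt x y with hxy | hxy
  · rw [intervalIntegral_eq_zero_of_nonpos hg.eq_zero_of_neg (a := -y) (b := x - y) (by linarith)
      (by linarith), sub_zero]
    exact intervalIntegral.intervalIntegral_pos_of_pos_on (hg.intervalIntegrable 0 x) hpos hx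
  · rw [← intervalIntegral.integral_add_adjacent_intervals (hg.intervalIntegrable (-y) 0)
      (hg.intervalIntegrable 0 (x - y)),
      intervalIntegral_eq_zero_of_nonpos hg.eq_zero_of_neg (by linarith) le_rfl, zero_add,
      intervalIntegral.integral_interval_sub_left (hg.intervalIntegrable 0 x)
        (hg.intervalIntegrable 0 (x - y))]
    exact intervalIntegral.intervalIntegral_pos_of_pos_on (hg.intervalIntegrable _ _)
      (fun z hz => hpos z ⟨by linarith [hz.1], hz.2⟩) (by linarith)

lemma psi_pos (hg : Causal g) (hμ0 : μ (Iic 0) = 0) {x : ℝ} (hpos : ∀ z ∈ Ioo 0 x, 0 < g z)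
    (hx : 0 < x) : 0 < Psi μ g x := by
  rw [hg.psi_eq_integral_integral hμ0 hx.le]
  refine integral_pos_of_ae_pos ?_ ?_
  · simpa only [intervalIntegral.integral_of_le hx.le] using
      (hg.integrable_prod hμ0 x).integral_prod_right
  · filter_upwards [ae_pos_of_measure_Iic_zero hμ0] with y hy
    exact hg.integral_sub_comp_sub_pos hpos hx hy

lemma iterate_psi_pos (hg : Causal g) (hμ0 : μ (Iic 0) = 0) (hpos : ∀ z > 0, 0 < g z) (n : ℕ) :
    ∀ x > 0, 0 < (Psi μ)^[n] g x := by
  induction n with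
  | zero => exact hpos
  | succ n ih =>
    intro x hx
    rw [Function.iterate_succ_apply']
    exact (hg.iterate_psi hμ0 n).psi_pos hμ0 (fun z hz => ih z hz.1) hx

lemma pos_of_eq_mul_add_psi {u h : ℝ → ℝ} (hu : Causal u) (hμ0 : μ (Iic 0) = 0) {a : ℝ}
    (ha : 0 < a) (hcont : ContinuousOn h (Ici 0)) (hpos : ∀ z ≥ 0, 0 < h z)
    (hrel : ∀ x ≥ 0, u x = a * (h x + Psi μ u x)) {x : ℝ} (hx : 0 ≤ x) : 0 < u x := by
  set f := fun x => h x + Psi μ u x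
  have hu_pos : ∀ z ≥ 0, 0 < u z ↔ 0 < f z := fun z hz => by
    rw [hrel z hz]; exact mul_pos_iff_of_pos_left ha
  by_contra hux
  set S := Ici 0 ∩ f ⁻¹' Iic 0
  have hS : IsClosed S := (hcont.add (hu.continuous_psi hμ0).continuousOn)
    |>.preimage_isClosed_of_isClosed isClosed_Ici isClosed_Iic
  have hbdd : BddBelow S := ⟨0, fun z hz => hz.1⟩
  obtain ⟨hx₀, hfx₀⟩ : sInf S ∈ S :=
    hS.csInf_mem ⟨x, hx, not_lt.1 fun hfx => hux ((hu_pos x hx).2 hfx)⟩ hbdd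
  have hbelow : ∀ z ∈ Ico 0 (sInf S), 0 < u z := fun z hz =>
    (hu_pos z hz.1).2 (not_le.1 fun hfz => notMem_of_lt_csInf hz.2 hbdd ⟨hz.1, hfz⟩)
  have hx₀pos : 0 < sInf S := by
    refine lt_of_le_of_ne hx₀ fun h0 => ?_
    have hf0 : f 0 ≤ 0 := h0 ▸ hfx₀
    simp only [f, Psi, intervalIntegral.integral_same, add_zero] at hf0
    linarith [hpos 0 le_rfl]
  have hψ := hu.psi_pos hμ0 (fun z hz => hbelow z ⟨hz.1.le, hz.2⟩) hx₀pos
  linarith [hpos _ hx₀, show f (sInf S) ≤ 0 from hfx₀]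

end Causal

theorem psi_pos_general (μ : Measure ℝ) [IsProbabilityMeasure μ] (hμ0 : μ (Iic 0) = 0)
    (h : ℝ → ℝ)
    (hcont : ContinuousOn h (Ici 0)) (hpos : ∀ z ≥ (0:ℝ), 0 < h z) :
    (∀ n : ℕ, ∀ x : ℝ, 0 < x → 0 < ((Psi μ)^[n] h) x) ∧
      ∀ a : ℝ, 0 < a → ∀ u : ℝ → ℝ, Measurable u → LocBdd u →
        (∀ x ≥ (0:ℝ), u x = a * (h x + Psi μ u x)) → ∀ x ≥ (0:ℝ), 0 < u x := by
  refine ⟨fun n x hx => ?_, fun a ha u hu hloc hrel x hx => ?_⟩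
  · rw [← iterate_psi_eqOn (eqOn_indicator (f := h)) n hx.le]
    refine (Causal.indicator_Ici_of_continuousOn hcont).iterate_psi_pos hμ0 (fun z hz => ?_) n x hx
    rw [indicator_of_mem (mem_Ici.2 hz.le)]
    exact hpos z hz.le
  · rw [← indicator_of_mem (mem_Ici.2 hx) u]
    refine (Causal.indicator_Ici (hu.indicator measurableSet_Ici) hloc).pos_of_eq_mul_add_psi
      hμ0 ha hcont hpos (fun z hz => ?_) hx
    rw [indicator_of_mem (mem_Ici.2 hz), psi_eqOn eqOn_indicator hz]
    exact hrel z hz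

/-- if `h` is continuous on `[0,∞)` and strictly positive there, then
`(Ψ_Fⁿ h)(x) > 0` for every `n` and every `x > 0`, and consequently any measurable locally
bounded solution `u_{α,h}` of `u = α(h + Ψ_F u)` is strictly positive on `[0,∞)` for every
`α > 0`. -/
theorem psi_pos (μ : Measure ℝ) [IsProbabilityMeasure μ] (hμ0 : μ (Iic 0) = 0)
    (h : ℝ → ℝ) (hmeas : Measurable h)
    (hcont : ContinuousOn h (Ici 0)) (hpos : ∀ z ≥ (0:ℝ), 0 < h z) :
    (∀ n : ℕ, ∀ x : ℝ, 0 < x → 0 < ((Psi μ)^[n] h) x) ∧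
      ∀ a : ℝ, 0 < a → ∀ u : ℝ → ℝ, Measurable u → LocBdd u →
        (∀ x ≥ (0:ℝ), u x = a * (h x + Psi μ u x)) → ∀ x ≥ (0:ℝ), 0 < u x :=
  psi_pos_general μ hμ0 h hcont hpos
end

section
/- (Optimal loading for the ruin probability under logit demand.) Let λ, E, r, β₁ > 0 and β₀ ∈ ℝ. Define p(θ) = 1/(1 + e^{β₀+β₁θ}), c(θ) = (1+θ) λ p(θ) E − r, α(θ) = λ p(θ)/c(θ), and θ* = (1/β₁)( ln( λE/(r β₁) ) − β₀ ). If c(θ*) > 0, then θ* is the unique global minimizer of α over the set {θ ∈ ℝ : c(θ) > 0}. -/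
/-!
The premium rate factors as `c = λ p g` with `g(θ) = (1+θ)E − (r/λ)(1 + e^{β₀+β₁θ})`, because
`1/p = 1 + e^{β₀+β₁θ}`. Hence `α = 1/g`, and `{c > 0} = {g > 0}`. The function `g` is strictly
concave and `θ*` is its critical point (`(r/λ) β₁ e^{β₀+β₁θ*} = E`), so by the strict tangent-line
inequality for `exp` it is the strict global maximum of `g`, i.e. the strict global minimum of `α`.
-/

open Real

/-- The logit demand (market share) function `p(θ) = 1/(1 + e^{β₀+β₁θ})`. -/
noncomputable def logitP (β₀ β₁ θ : ℝ) : ℝ := 1 / (1 + Real.exp (β₀ + β₁ * θ))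

/-- The net premium income rate `c(θ) = (1+θ) λ p(θ) E − r`. -/
noncomputable def premRate (lam E r β₀ β₁ θ : ℝ) : ℝ :=
  (1 + θ) * lam * logitP β₀ β₁ θ * E - r

/-- `α(θ) = λ p(θ) / c(θ)`, the quantity the ruin probability is increasing in. -/
noncomputable def alphaLoad (lam E r β₀ β₁ θ : ℝ) : ℝ :=
  lam * logitP β₀ β₁ θ / premRate lam E r β₀ β₁ θ

/-- The candidate optimal loading `θ* = (1/β₁)(ln(λE/(rβ₁)) − β₀)`. -/
noncomputable def thetaRuin (lam E r β₀ β₁ : ℝ) : ℝ :=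
  (1 / β₁) * (Real.log (lam * E / (r * β₁)) - β₀)

theorem Real.exp_add_exp_mul_sub_lt_exp {x y : ℝ} (h : x ≠ y) :
    exp x + exp x * (y - x) < exp y := by
  have hlt : y - x + 1 < exp (y - x) := add_one_lt_exp (sub_ne_zero.mpr h.symm)
  calc exp x + exp x * (y - x) = exp x * (y - x + 1) := by ring
    _ < exp x * exp (y - x) := mul_lt_mul_of_pos_left hlt (exp_pos x)
    _ = exp y := by rw [← exp_add, add_sub_cancel]

theorem logitP_pos (β₀ β₁ θ : ℝ) : 0 < logitP β₀ β₁ θ := by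
  unfold logitP; positivity

noncomputable def premRateNormalized (lam E r β₀ β₁ θ : ℝ) : ℝ :=
  (1 + θ) * E - r / lam * (1 + exp (β₀ + β₁ * θ))

section

variable {lam E r β₀ β₁ : ℝ}

theorem premRate_eq_mul_premRateNormalized (hlam : lam ≠ 0) (θ : ℝ) :
    premRate lam E r β₀ β₁ θ = lam * logitP β₀ β₁ θ * premRateNormalized lam E r β₀ β₁ θ := by
  have hden : 1 + exp (β₀ + β₁ * θ) ≠ 0 := by positivity
  unfold premRate premRateNormalized logitP
  field_simp

theorem alphaLoad_eq_inv_premRateNormalized (hlam : lam ≠ 0) (θ : ℝ) :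
    alphaLoad lam E r β₀ β₁ θ = (premRateNormalized lam E r β₀ β₁ θ)⁻¹ := by
  rw [alphaLoad, premRate_eq_mul_premRateNormalized hlam,
    div_mul_cancel_left₀ (mul_ne_zero hlam (logitP_pos β₀ β₁ θ).ne')]

theorem premRateNormalized_lt_of_critical {s θ : ℝ} (hrl : 0 < r / lam) (hβ₁ : β₁ ≠ 0)
    (hcrit : r / lam * β₁ * exp (β₀ + β₁ * s) = E) (hne : θ ≠ s) :
    premRateNormalized lam E r β₀ β₁ θ < premRateNormalized lam E r β₀ β₁ s := by
  have htangent := exp_add_exp_mul_sub_lt_exp (x := β₀ + β₁ * s) (y := β₀ + β₁ * θ)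
    (by intro h; exact hne (mul_left_cancel₀ hβ₁ (add_left_cancel h)).symm)
  have := mul_lt_mul_of_pos_left htangent hrl
  unfold premRateNormalized
  rw [← hcrit]
  linarith

theorem exp_thetaRuin (hβ₁ : β₁ ≠ 0) (hpos : 0 < lam * E / (r * β₁)) :
    exp (β₀ + β₁ * thetaRuin lam E r β₀ β₁) = lam * E / (r * β₁) := by
  conv_rhs => rw [← exp_log hpos]
  rw [thetaRuin]
  congr 1
  field_simp
  ring

end

theorem optimal_loading_ruin_general (lam E r β₀ β₁ : ℝ)
    (hlam : 0 < lam) (hE : 0 < E) (hr : 0 < r) (hβ₁ : 0 < β₁) :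
    ∀ θ : ℝ, 0 < premRate lam E r β₀ β₁ θ → θ ≠ thetaRuin lam E r β₀ β₁ →
      alphaLoad lam E r β₀ β₁ (thetaRuin lam E r β₀ β₁) < alphaLoad lam E r β₀ β₁ θ := by
  intro θ hc hne
  have hcrit : r / lam * β₁ * exp (β₀ + β₁ * thetaRuin lam E r β₀ β₁) = E := by
    rw [exp_thetaRuin hβ₁.ne' (by positivity)]
    field_simp
  have hgθ : 0 < premRateNormalized lam E r β₀ β₁ θ := by
    rw [premRate_eq_mul_premRateNormalized hlam.ne'] at hc
    exact (pos_iff_pos_of_mul_pos hc).mp (mul_pos hlam (logitP_pos β₀ β₁ θ))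
  rw [alphaLoad_eq_inv_premRateNormalized hlam.ne', alphaLoad_eq_inv_premRateNormalized hlam.ne']
  exact inv_strictAnti₀ hgθ
    (premRateNormalized_lt_of_critical (by positivity) hβ₁.ne' hcrit hne)

/-- optimal loading for the ruin probability under logit demand:
if `c(θ*) > 0` then `θ*` is the unique global minimizer of `α` over `{θ : c(θ) > 0}`. -/
theorem optimal_loading_ruin (lam E r β₀ β₁ : ℝ)
    (hlam : 0 < lam) (hE : 0 < E) (hr : 0 < r) (hβ₁ : 0 < β₁)
    (hcs : 0 < premRate lam E r β₀ β₁ (thetaRuin lam E r β₀ β₁)) :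
    ∀ θ : ℝ, 0 < premRate lam E r β₀ β₁ θ → θ ≠ thetaRuin lam E r β₀ β₁ →
      alphaLoad lam E r β₀ β₁ (thetaRuin lam E r β₀ β₁) < alphaLoad lam E r β₀ β₁ θ :=
  optimal_loading_ruin_general lam E r β₀ β₁ hlam hE hr hβ₁
end

section
/- (Optimal loading for the expected profit under logit demand.) Let β₀ ∈ ℝ and β₁ > 0, and define h(θ) = θ/(1 + e^{β₀+β₁θ}). Then the equation 1 + e^{β₀+β₁θ} − β₁ θ e^{β₀+β₁θ} = 0 has a unique real solution θ*, θ* > 0, and θ* is the unique global maximizer of h on ℝ. -/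
/-!
Write `s = β₀ + β₁ θ`. The derivative of `h(θ) = θ / (1 + eˢ)` is `(1 + eˢ - β₁ θ eˢ) / (1 + eˢ)²`,
and its numerator is `eˢ (e⁻ˢ + 1 - β₁ θ)`. The second factor is strictly decreasing in `θ`,
positive at `θ = 0` and negative for large `θ`, so it has exactly one zero `θ* > 0`; `h` is strictly
increasing before `θ*` and strictly decreasing after it.
-/

open Real Set

theorem lt_of_hasDerivAt_pos_of_neg {f f' : ℝ → ℝ} {c x : ℝ} (hf : ∀ y, HasDerivAt f (f' y) y)
    (hpos : ∀ y < c, 0 < f' y) (hneg : ∀ y, c < y → f' y < 0) (hx : x ≠ c) : f x < f c := by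
  have hcont : ContinuousOn f univ :=
    (continuous_iff_continuousAt.2 fun y => (hf y).continuousAt).continuousOn
  rcases hx.lt_or_gt with hlt | hgt
  · have hmono : StrictMonoOn f (Iic c) :=
      strictMonoOn_of_hasDerivWithinAt_pos (convex_Iic c) (hcont.mono (subset_univ _))
        (fun y _ => (hf y).hasDerivWithinAt) fun y hy => hpos y (by simpa using hy)
    exact hmono hlt.le (mem_Iic.2 le_rfl) hlt
  · have hanti : StrictAntiOn f (Ici c) :=
      strictAntiOn_of_hasDerivWithinAt_neg (convex_Ici c) (hcont.mono (subset_univ _))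
        (fun y _ => (hf y).hasDerivWithinAt) fun y hy => hneg y (by simpa using hy)
    exact hanti (mem_Ici.2 le_rfl) hgt.le hgt

noncomputable section

namespace LogitLoading

def profit (β₀ β₁ θ : ℝ) : ℝ := θ / (1 + exp (β₀ + β₁ * θ))

def foc (β₀ β₁ θ : ℝ) : ℝ := 1 + exp (β₀ + β₁ * θ) - β₁ * θ * exp (β₀ + β₁ * θ)

def normalizedFoc (β₀ β₁ θ : ℝ) : ℝ := exp (-(β₀ + β₁ * θ)) + 1 - β₁ * θ

variable {β₀ β₁ : ℝ}

theorem foc_eq_exp_mul_normalizedFoc (θ : ℝ) :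
    foc β₀ β₁ θ = exp (β₀ + β₁ * θ) * normalizedFoc β₀ β₁ θ := by
  rw [foc, normalizedFoc, exp_neg]
  field_simp

theorem strictAnti_normalizedFoc (hβ₁ : 0 < β₁) : StrictAnti (normalizedFoc β₀ β₁) := by
  intro a b hab
  have hexp : exp (-(β₀ + β₁ * b)) < exp (-(β₀ + β₁ * a)) := exp_lt_exp.2 (by nlinarith)
  simp only [normalizedFoc]
  nlinarith

theorem exists_pos_normalizedFoc_eq_zero (hβ₁ : 0 < β₁) :
    ∃ θ, 0 < θ ∧ normalizedFoc β₀ β₁ θ = 0 := by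
  set θ₁ := (2 + |β₀|) / β₁
  have hβ₁θ₁ : β₁ * θ₁ = 2 + |β₀| := mul_div_cancel₀ _ hβ₁.ne'
  have hcont : ContinuousOn (normalizedFoc β₀ β₁) (Icc 0 θ₁) := by
    unfold normalizedFoc
    fun_prop
  have hat0 : 0 < normalizedFoc β₀ β₁ 0 := by
    simp only [normalizedFoc, mul_zero, sub_zero]
    positivity
  have hatθ₁ : normalizedFoc β₀ β₁ θ₁ < 0 := by
    have hexp : exp (-(β₀ + β₁ * θ₁)) < 1 :=
      exp_lt_one_iff.2 (by rw [hβ₁θ₁]; linarith [neg_abs_le β₀])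
    simp only [normalizedFoc]
    linarith [abs_nonneg β₀]
  obtain ⟨θ, hθ, hzero⟩ :=
    intermediate_value_Icc' (by positivity) hcont ⟨hatθ₁.le, hat0.le⟩
  refine ⟨θ, hθ.1.lt_of_ne ?_, hzero⟩
  rintro rfl
  exact hat0.ne' hzero

theorem hasDerivAt_profit (θ : ℝ) :
    HasDerivAt (profit β₀ β₁) (foc β₀ β₁ θ / (1 + exp (β₀ + β₁ * θ)) ^ 2) θ := by
  have hexp : HasDerivAt (fun x => 1 + exp (β₀ + β₁ * x)) (exp (β₀ + β₁ * θ) * β₁) θ := by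
    simpa using (((hasDerivAt_id θ).const_mul β₁).const_add β₀).exp.const_add 1
  refine ((hasDerivAt_id' θ).div hexp (by positivity)).congr_deriv ?_
  rw [foc]
  ring

end LogitLoading

end

open LogitLoading in
/-- optimal loading for the expected profit under logit demand: the equation
`1 + e^{β₀+β₁θ} − β₁ θ e^{β₀+β₁θ} = 0` has a unique real solution `θ*`, `θ* > 0`, and `θ*`
is the unique global maximizer of `h(θ) = θ/(1 + e^{β₀+β₁θ})` on `ℝ`. -/
theorem optimal_loading_profit (β₀ β₁ : ℝ) (hβ₁ : 0 < β₁) :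
    ∃ θs : ℝ,
      (1 + Real.exp (β₀ + β₁ * θs) - β₁ * θs * Real.exp (β₀ + β₁ * θs) = 0) ∧
      0 < θs ∧
      (∀ θ : ℝ, 1 + Real.exp (β₀ + β₁ * θ) - β₁ * θ * Real.exp (β₀ + β₁ * θ) = 0 → θ = θs) ∧
      (∀ θ : ℝ, θ ≠ θs →
        θ / (1 + Real.exp (β₀ + β₁ * θ)) < θs / (1 + Real.exp (β₀ + β₁ * θs))) := by
  obtain ⟨θs, hθs_pos, hθs⟩ := exists_pos_normalizedFoc_eq_zero (β₀ := β₀) hβ₁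
  have hanti := strictAnti_normalizedFoc (β₀ := β₀) hβ₁
  refine ⟨θs, ?_, hθs_pos, fun θ hθ => hanti.injective ?_, fun θ hθ => ?_⟩
  · change foc β₀ β₁ θs = 0
    rw [foc_eq_exp_mul_normalizedFoc, hθs, mul_zero]
  · change foc β₀ β₁ θ = 0 at hθ
    rw [foc_eq_exp_mul_normalizedFoc, mul_eq_zero] at hθ
    exact hθ.resolve_left (exp_ne_zero _) |>.trans hθs.symm
  · refine lt_of_hasDerivAt_pos_of_neg (f := profit β₀ β₁) hasDerivAt_profit
      (fun y hy => div_pos ?_ (by positivity)) (fun y hy => div_neg_of_neg_of_pos ?_ (by positivity)) hθ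
    · rw [foc_eq_exp_mul_normalizedFoc]
      exact mul_pos (exp_pos _) (hθs ▸ hanti hy)
    · rw [foc_eq_exp_mul_normalizedFoc]
      exact mul_neg_of_pos_of_neg (exp_pos _) (hθs ▸ hanti hy)
end

section
/- (Bound on the error from neglecting claim dependencies.) Let c > 0, λ̃ > 0, λ^∥ ≥ 0, p^{(1,1)} ∈ [0,1], and set λ̂ = λ̃ + p^{(1,1)}λ^∥. Let F_Ỹ, F_Ŷ, H₁, H₂, H₁₂ be distribution functions of probability measures on [0,∞) vanishing at 0, related by λ̂ F_Ŷ = λ̃ F_Ỹ + p^{(1,1)} λ^∥ ( H₁ + H₂ − H₁₂ ). Let V, V_ind : [0,∞) → [0,1] be nonincreasing with V(0⁺) = V_ind(0⁺) = v₀ and satisfy, for all x ≥ 0, V(x) = v₀ + (λ̃/c) ∫₀ˣ ( V(z) − ∫₀ᶻ V(z−y) dF_Ỹ(y) + F_Ỹ(z) − 1 ) dz and V_ind(x) = v₀ + (λ̂/c) ∫₀ˣ ( V_ind(z) − ∫₀ᶻ V_ind(z−y) dF_Ŷ(y) + F_Ŷ(z) − 1 ) dz. Then for every x ≥ 0, |V(x)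 − V_ind(x)| ≤ p^{(1,1)} λ^∥ ( e^{2 λ̃ x / c} − 1 ) / λ̃. -/
open MeasureTheory Set Filter

namespace DepAux

open scoped Nat ENNReal
open intervalIntegral

/-- The inner (Lebesgue–Stieltjes) integral. -/
noncomputable def inn (μ : Measure ℝ) (h : ℝ → ℝ) (z : ℝ) : ℝ :=
  ∫ y in Icc (0:ℝ) z, h (z - y) ∂μ

/-- The distribution function. -/
noncomputable def FF (μ : Measure ℝ) (z : ℝ) : ℝ := (μ (Iic z)).toReal

/-- The integrand of the integrated ruin equation. -/
noncomputable def G (μ : Measure ℝ) (h : ℝ → ℝ) (z : ℝ) : ℝ :=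
  h z - inn μ h z + FF μ z - 1

lemma FF_mono (μ : Measure ℝ) [IsFiniteMeasure μ] : Monotone (FF μ) := fun a b hab =>
  ENNReal.toReal_mono (measure_ne_top μ _) (measure_mono (Iic_subset_Iic.2 hab))

lemma FF_nonneg (μ : Measure ℝ) (z : ℝ) : 0 ≤ FF μ z := ENNReal.toReal_nonneg

lemma FF_le_one (μ : Measure ℝ) [IsProbabilityMeasure μ] (z : ℝ) : FF μ z ≤ 1 := by
  simpa [FF] using ENNReal.toReal_mono ENNReal.one_ne_top (prob_le_one (μ := μ) (s := Iic z))

lemma meas_Icc (μ : Measure ℝ) (h0 : μ (Iic 0) = 0) {z : ℝ} (hz : 0 ≤ z) :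
    μ (Icc 0 z) = μ (Iic z) := by
  refine le_antisymm (measure_mono Icc_subset_Iic_self) ?_
  have hsub : Iic z ⊆ Iic 0 ∪ Icc 0 z := by
    intro w hw
    rcases le_or_gt w 0 with h | h
    · exact Or.inl h
    · exact Or.inr ⟨h.le, hw⟩
  calc μ (Iic z) ≤ μ (Iic 0 ∪ Icc 0 z) := measure_mono hsub
    _ ≤ μ (Iic 0) + μ (Icc 0 z) := measure_union_le _ _
    _ = μ (Icc 0 z) := by rw [h0, zero_add]

lemma measurable_inn (μ : Measure ℝ) [SFinite μ] {h : ℝ → ℝ} (hh : Measurable h) :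
    Measurable (inn μ h) := by
  have hset : MeasurableSet {p : ℝ × ℝ | 0 ≤ p.2 ∧ p.2 ≤ p.1} :=
    (measurableSet_le measurable_const measurable_snd).inter
      (measurableSet_le measurable_snd measurable_fst)
  have hF : Measurable ({p : ℝ × ℝ | 0 ≤ p.2 ∧ p.2 ≤ p.1}.indicator
      (fun p : ℝ × ℝ => h (p.1 - p.2))) :=
    (hh.comp (measurable_fst.sub measurable_snd)).indicator hset
  have key : ∀ z : ℝ, inn μ h z
      = ∫ y, ({p : ℝ × ℝ | 0 ≤ p.2 ∧ p.2 ≤ p.1}.indicator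
          (fun p : ℝ × ℝ => h (p.1 - p.2))) (z, y) ∂μ := by
    intro z
    rw [inn, ← MeasureTheory.integral_indicator measurableSet_Icc]
    congr 1
  have := (hF.stronglyMeasurable.integral_prod_right' (ν := μ)).measurable
  simpa [← key] using this

lemma intOn (μ : Measure ℝ) {g : ℝ → ℝ} (hg : Measurable g) {C : ℝ}
    {S : Set ℝ} (hS : MeasurableSet S) (hfin : μ S < ⊤) (hb : ∀ y ∈ S, |g y| ≤ C) :
    IntegrableOn g S μ := by
  refine Integrable.mono' (g := fun _ : ℝ => C)
    ((integrableOn_const_iff (C := C)).2 (Or.inr hfin))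
    hg.aestronglyMeasurable ?_
  refine (ae_restrict_iff' hS).2 (Filter.Eventually.of_forall fun y hy => ?_)
  simpa [Real.norm_eq_abs] using hb y hy

lemma comp_mem {z y : ℝ} (hy : y ∈ Icc (0:ℝ) z) : z - y ∈ Icc (0:ℝ) z :=
  ⟨by linarith [hy.2], by linarith [hy.1]⟩

lemma intOn_comp (μ : Measure ℝ) [IsFiniteMeasure μ] {h : ℝ → ℝ} (hh : Measurable h)
    {C z : ℝ} (hb : ∀ w ∈ Icc (0:ℝ) z, |h w| ≤ C) :
    IntegrableOn (fun y => h (z - y)) (Icc 0 z) μ :=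
  intOn μ (hh.comp (measurable_const.sub measurable_id)) measurableSet_Icc
    (measure_lt_top μ _) (fun y hy => hb _ (comp_mem hy))

lemma abs_inn_le (μ : Measure ℝ) [IsProbabilityMeasure μ] {h : ℝ → ℝ} {z C : ℝ}
    (hC : 0 ≤ C) (hb : ∀ w ∈ Icc (0:ℝ) z, |h w| ≤ C) : |inn μ h z| ≤ C := by
  have h1 : ∀ y ∈ Icc (0:ℝ) z, ‖h (z - y)‖ ≤ C := fun y hy => by
    simpa [Real.norm_eq_abs] using hb _ (comp_mem hy)
  have h2 := norm_setIntegral_le_of_norm_le_const (μ := μ) (s := Icc (0:ℝ) z)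
    (f := fun y => h (z - y)) (measure_lt_top μ _) h1
  calc |inn μ h z| ≤ C * (μ (Icc (0:ℝ) z)).toReal := by
        simpa [Real.norm_eq_abs, inn, Measure.real] using h2
    _ ≤ C * 1 := by
        refine mul_le_mul_of_nonneg_left ?_ hC
        simpa using ENNReal.toReal_mono ENNReal.one_ne_top (prob_le_one (μ := μ))
    _ = C := mul_one C

lemma inn_nonneg (μ : Measure ℝ) {h : ℝ → ℝ} {z : ℝ}
    (hpos : ∀ w ∈ Icc (0:ℝ) z, 0 ≤ h w) : 0 ≤ inn μ h z :=
  setIntegral_nonneg measurableSet_Icc fun y hy => hpos _ (comp_mem hy)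

lemma inn_le_FF (μ : Measure ℝ) [IsProbabilityMeasure μ] (h0 : μ (Iic 0) = 0)
    {h : ℝ → ℝ} (hh : Measurable h) {z : ℝ} (hz : 0 ≤ z)
    (hb : ∀ w ∈ Icc (0:ℝ) z, h w ∈ Icc (0:ℝ) 1) : inn μ h z ≤ FF μ z := by
  have habs : ∀ w ∈ Icc (0:ℝ) z, |h w| ≤ 1 := fun w hw =>
    abs_le.2 ⟨by linarith [(hb w hw).1], (hb w hw).2⟩
  have h1 : inn μ h z ≤ ∫ (_ : ℝ) in Icc (0:ℝ) z, (1:ℝ) ∂μ := by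
    refine setIntegral_mono_on (intOn_comp μ hh habs)
      ((integrableOn_const_iff (C := (1:ℝ))).2 (Or.inr (measure_lt_top μ _))) measurableSet_Icc ?_
    exact fun y hy => (hb _ (comp_mem hy)).2
  calc inn μ h z ≤ ∫ (_ : ℝ) in Icc (0:ℝ) z, (1:ℝ) ∂μ := h1
    _ = (μ (Icc (0:ℝ) z)).toReal := by simp [Measure.real]
    _ = FF μ z := by rw [FF, meas_Icc μ h0 hz]

lemma integrableOn_smul_meas {μ : Measure ℝ} {a : ℝ≥0∞} (ha : a ≠ ⊤) {g : ℝ → ℝ} {S : Set ℝ}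
    (h : IntegrableOn g S μ) : IntegrableOn g S (a • μ) := by
  rw [IntegrableOn, Measure.restrict_smul]
  exact h.smul_measure ha

lemma setIntegral_smul_meas (μ : Measure ℝ) {a : ℝ} (ha : 0 ≤ a) (g : ℝ → ℝ) (S : Set ℝ) :
    ∫ y in S, g y ∂(ENNReal.ofReal a • μ) = a * ∫ y in S, g y ∂μ := by
  rw [Measure.restrict_smul, MeasureTheory.integral_smul_measure, ENNReal.toReal_ofReal ha, smul_eq_mul]

lemma setIntegral_add_meas (μ₁ μ₂ : Measure ℝ) {g : ℝ → ℝ} {S : Set ℝ}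
    (h₁ : IntegrableOn g S μ₁) (h₂ : IntegrableOn g S μ₂) :
    ∫ y in S, g y ∂(μ₁ + μ₂) = (∫ y in S, g y ∂μ₁) + ∫ y in S, g y ∂μ₂ := by
  rw [Measure.restrict_add, integral_add_measure h₁ h₂]

/-- Grönwall-type iteration lemma. -/
lemma gronwall_aux {K b : ℝ} (hK : 0 < K) (hb : 0 ≤ b) (m : ℝ → ℝ)
    (hm1 : ∀ x ≥ (0:ℝ), m x ≤ 1)
    (hmint : ∀ x ≥ (0:ℝ), IntervalIntegrable m volume 0 x)
    (hrec : ∀ x ≥ (0:ℝ), m x ≤ K * (∫ z in (0:ℝ)..x, m z) + b * x) :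
    ∀ x ≥ (0:ℝ), m x ≤ b / K * (Real.exp (K * x) - 1) := by
  have key : ∀ n : ℕ, ∀ x ≥ (0:ℝ), m x ≤ b / K * (Real.exp (K * x) - 1) + (K * x) ^ n / n ! := by
    intro n
    induction n with
    | zero =>
      intro x hx
      have h1 : 0 ≤ b / K * (Real.exp (K * x) - 1) :=
        mul_nonneg (div_nonneg hb hK.le) (sub_nonneg.2 (Real.one_le_exp (mul_nonneg hK.le hx)))
      have := hm1 x hx
      simp only [pow_zero, Nat.factorial_zero, Nat.cast_one, div_one]
      linarith
    | succ n ih =>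
      intro x hx
      have hcont : Continuous fun z : ℝ => b / K * (Real.exp (K * z) - 1) + (K * z) ^ n / n ! := by
        fun_prop
      have h2 : (∫ z in (0:ℝ)..x, m z)
          ≤ ∫ z in (0:ℝ)..x, (b / K * (Real.exp (K * z) - 1) + (K * z) ^ n / n !) :=
        integral_mono_on hx (hmint x hx) (hcont.intervalIntegrable 0 x)
          fun z hz => ih z hz.1
      have hexp : (∫ z in (0:ℝ)..x, Real.exp (K * z)) = (Real.exp (K * x) - 1) / K := by
        rw [integral_comp_mul_left Real.exp hK.ne']
        simp [integral_exp, smul_eq_mul]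
        ring
      have hIa : (∫ z in (0:ℝ)..x, b / K * (Real.exp (K * z) - 1))
          = b / K * ((Real.exp (K * x) - 1) / K - x) := by
        rw [intervalIntegral.integral_const_mul, integral_sub ((by fun_prop :
            Continuous fun z : ℝ => Real.exp (K * z)).intervalIntegrable 0 x)
          (intervalIntegrable_const), hexp, intervalIntegral.integral_const]
        simp
      have hp : (fun z : ℝ => (K * z) ^ n / n !) = fun z : ℝ => K ^ n / n ! * z ^ n := by
        funext z; rw [mul_pow]; ring
      have hIb : (∫ z in (0:ℝ)..x, (K * z) ^ n / n !)
          = K ^ n / n ! * (x ^ (n + 1) / (n + 1)) := by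
        rw [hp, intervalIntegral.integral_const_mul, integral_pow]
        simp
      have hsplit : (∫ z in (0:ℝ)..x, (b / K * (Real.exp (K * z) - 1) + (K * z) ^ n / n !))
          = b / K * ((Real.exp (K * x) - 1) / K - x) + K ^ n / n ! * (x ^ (n + 1) / (n + 1)) := by
        rw [integral_add ((by fun_prop : Continuous fun z : ℝ =>
            b / K * (Real.exp (K * z) - 1)).intervalIntegrable 0 x)
          ((by fun_prop : Continuous fun z : ℝ => (K * z) ^ n / n !).intervalIntegrable 0 x),
          hIa, hIb]
      have h3 := hrec x hx
      have hfac : ((n + 1)! : ℝ) = (n + 1) * n ! := by exact_mod_cast Nat.factorial_succ n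
      have hfn : (n ! : ℝ) ≠ 0 := Nat.cast_ne_zero.2 (Nat.factorial_ne_zero n)
      have hn1 : ((n : ℝ) + 1) ≠ 0 := by positivity
      have hgoal : K * (b / K * ((Real.exp (K * x) - 1) / K - x)
            + K ^ n / n ! * (x ^ (n + 1) / (n + 1))) + b * x
          = b / K * (Real.exp (K * x) - 1) + (K * x) ^ (n + 1) / (n + 1)! := by
        rw [hfac, mul_pow]
        field_simp
        ring
      have h4 : K * (∫ z in (0:ℝ)..x, m z) + b * x
          ≤ K * (b / K * ((Real.exp (K * x) - 1) / K - x)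
            + K ^ n / n ! * (x ^ (n + 1) / (n + 1))) + b * x := by
        have := mul_le_mul_of_nonneg_left (h2.trans_eq hsplit) hK.le
        linarith
      calc m x ≤ K * (∫ z in (0:ℝ)..x, m z) + b * x := h3
        _ ≤ _ := h4
        _ = _ := hgoal
  intro x hx
  have hlim : Tendsto (fun n : ℕ => b / K * (Real.exp (K * x) - 1) + (K * x) ^ n / n !) atTop
      (nhds (b / K * (Real.exp (K * x) - 1) + 0)) :=
    tendsto_const_nhds.add (FloorSemiring.tendsto_pow_div_factorial_atTop (K * x))
  have := ge_of_tendsto hlim (Filter.Eventually.of_forall fun n => key n x hx)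
  simpa using this

end DepAux

open DepAux intervalIntegral

/-- bound on the error from neglecting claim dependencies: with
`λ̂ = λ̃ + p^{(1,1)}λ^∥`, `λ̂ F_Ŷ = λ̃ F_Ỹ + p^{(1,1)}λ^∥(H₁ + H₂ − H₁₂)` and `V`, `V_ind`
nonincreasing `[0,1]`-valued solutions of the respective integrated ruin equations with
common boundary value `v₀`, one has
`|V(x) − V_ind(x)| ≤ p^{(1,1)} λ^∥ (e^{2λ̃x/c} − 1)/λ̃` for every `x ≥ 0`. -/
theorem dependency_error_bound
    (c ltil lpar p11 : ℝ) (hc : 0 < c) (hltil : 0 < ltil) (hlpar : 0 ≤ lpar)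
    (hp11 : p11 ∈ Icc (0:ℝ) 1)
    (lhat : ℝ) (hlhat : lhat = ltil + p11 * lpar)
    (μT μH ν₁ ν₂ ν₁₂ : Measure ℝ)
    [IsProbabilityMeasure μT] [IsProbabilityMeasure μH] [IsProbabilityMeasure ν₁]
    [IsProbabilityMeasure ν₂] [IsProbabilityMeasure ν₁₂]
    (hT0 : μT (Iic 0) = 0) (hH0 : μH (Iic 0) = 0) (hν₁0 : ν₁ (Iic 0) = 0)
    (hν₂0 : ν₂ (Iic 0) = 0) (hν₁₂0 : ν₁₂ (Iic 0) = 0)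
    (hmix : ∀ z : ℝ, lhat * (μH (Iic z)).toReal =
      ltil * (μT (Iic z)).toReal +
        p11 * lpar * ((ν₁ (Iic z)).toReal + (ν₂ (Iic z)).toReal - (ν₁₂ (Iic z)).toReal))
    (V Vind : ℝ → ℝ) (hVmeas : Measurable V) (hVindmeas : Measurable Vind)
    (hV01 : ∀ x ≥ (0:ℝ), V x ∈ Icc (0:ℝ) 1) (hVind01 : ∀ x ≥ (0:ℝ), Vind x ∈ Icc (0:ℝ) 1)
    (hVanti : AntitoneOn V (Ici 0)) (hVindanti : AntitoneOn Vind (Ici 0))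
    (v₀ : ℝ)
    (hVeq : ∀ x ≥ (0:ℝ), V x = v₀ + ltil / c * ∫ z in (0:ℝ)..x,
        (V z - (∫ y in Icc (0:ℝ) z, V (z - y) ∂μT) + (μT (Iic z)).toReal - 1))
    (hVindeq : ∀ x ≥ (0:ℝ), Vind x = v₀ + lhat / c * ∫ z in (0:ℝ)..x,
        (Vind z - (∫ y in Icc (0:ℝ) z, Vind (z - y) ∂μH) + (μH (Iic z)).toReal - 1)) :
    ∀ x ≥ (0:ℝ), |V x - Vind x| ≤ p11 * lpar * (Real.exp (2 * ltil * x / c) - 1) / ltil := by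
  classical
  set ρ : ℝ := p11 * lpar with hρdef
  have hρ : 0 ≤ ρ := mul_nonneg hp11.1 hlpar
  have hlhat0 : 0 ≤ lhat := by rw [hlhat]; linarith
  -- the difference function and its sup-norms
  set D : ℝ → ℝ := fun z => V z - Vind z with hD
  set m : ℝ → ℝ := fun x => supNorm D x with hm
  have hVb : ∀ w ∈ Ici (0:ℝ), |V w| ≤ 1 := fun w hw =>
    abs_le.2 ⟨by linarith [(hV01 w hw).1], (hV01 w hw).2⟩
  have hVindb : ∀ w ∈ Ici (0:ℝ), |Vind w| ≤ 1 := fun w hw =>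
    abs_le.2 ⟨by linarith [(hVind01 w hw).1], (hVind01 w hw).2⟩
  have hDb : ∀ w ≥ (0:ℝ), |D w| ≤ 1 := fun w hw => by
    have h1 := hV01 w hw; have h2 := hVind01 w hw
    exact abs_le.2 ⟨by simp only [hD]; linarith [h1.1, h2.2], by simp only [hD]; linarith [h1.2, h2.1]⟩
  have hDmeas : Measurable D := hVmeas.sub hVindmeas
  have hbdd : ∀ x : ℝ, BddAbove ((fun z => |D z|) '' Icc (0:ℝ) x) := fun x =>
    ⟨1, by rintro r ⟨w, hw, rfl⟩; exact hDb w hw.1⟩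
  have hle_m : ∀ {x z : ℝ}, z ∈ Icc (0:ℝ) x → |D z| ≤ m x := fun {x z} hz =>
    le_csSup (hbdd x) ⟨z, hz, rfl⟩
  have hm_le : ∀ {x M : ℝ}, 0 ≤ x → (∀ z ∈ Icc (0:ℝ) x, |D z| ≤ M) → m x ≤ M := by
    intro x M hx hM
    exact csSup_le ⟨|D 0|, ⟨0, ⟨le_refl 0, hx⟩, rfl⟩⟩ (by rintro r ⟨w, hw, rfl⟩; exact hM w hw)
  have hm0 : ∀ x ≥ (0:ℝ), 0 ≤ m x := fun x hx =>
    (abs_nonneg (D 0)).trans (hle_m ⟨le_refl 0, hx⟩)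
  have hm1 : ∀ x ≥ (0:ℝ), m x ≤ 1 := fun x hx => hm_le hx fun z hz => hDb z hz.1
  have hmmono : ∀ {z x : ℝ}, 0 ≤ z → z ≤ x → m z ≤ m x := fun {z x} hz hzx =>
    hm_le hz fun w hw => hle_m ⟨hw.1, hw.2.trans hzx⟩
  have hmint : ∀ x ≥ (0:ℝ), IntervalIntegrable m volume 0 x := by
    intro x hx
    apply MonotoneOn.intervalIntegrable
    rw [uIcc_of_le hx]
    exact fun u hu v _ huv => hmmono hu.1 huv
  -- the measure mixture identity
  have hMfin : IsFiniteMeasure (ENNReal.ofReal lhat • μH + ENNReal.ofReal ρ • ν₁₂) := by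
    constructor
    simp only [Measure.add_apply, Measure.smul_apply, smul_eq_mul, measure_univ, mul_one]
    exact ENNReal.add_lt_top.2 ⟨ENNReal.ofReal_lt_top, ENNReal.ofReal_lt_top⟩
  have hMeq : (ENNReal.ofReal lhat • μH + ENNReal.ofReal ρ • ν₁₂)
      = (ENNReal.ofReal ltil • μT + (ENNReal.ofReal ρ • ν₁ + ENNReal.ofReal ρ • ν₂)) := by
    refine @MeasureTheory.Measure.ext_of_Iic ℝ _ _ _ _ _ _ _ _ hMfin fun a => ?_
    have hz := hmix a
    have e1 : ∀ (μ : Measure ℝ) [IsProbabilityMeasure μ] (r : ℝ), 0 ≤ r →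
        (ENNReal.ofReal r • μ) (Iic a) = ENNReal.ofReal (r * (μ (Iic a)).toReal) := by
      intro μ _ r hr
      rw [Measure.smul_apply, smul_eq_mul, ENNReal.ofReal_mul hr,
        ENNReal.ofReal_toReal (measure_ne_top μ _)]
    simp only [Measure.add_apply]
    rw [e1 μH lhat hlhat0, e1 ν₁₂ ρ hρ, e1 μT ltil hltil.le, e1 ν₁ ρ hρ, e1 ν₂ ρ hρ,
      ← ENNReal.ofReal_add (mul_nonneg hlhat0 ENNReal.toReal_nonneg)
        (mul_nonneg hρ ENNReal.toReal_nonneg),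
      ← ENNReal.ofReal_add (mul_nonneg hρ ENNReal.toReal_nonneg)
        (mul_nonneg hρ ENNReal.toReal_nonneg),
      ← ENNReal.ofReal_add (mul_nonneg hltil.le ENNReal.toReal_nonneg)
        (add_nonneg (mul_nonneg hρ ENNReal.toReal_nonneg) (mul_nonneg hρ ENNReal.toReal_nonneg))]
    congr 1
    linarith
  -- integrability of the translated functions
  have hVindbd : ∀ z : ℝ, ∀ w ∈ Icc (0:ℝ) z, |Vind w| ≤ 1 := fun z w hw => hVindb w hw.1
  have hVbd : ∀ z : ℝ, ∀ w ∈ Icc (0:ℝ) z, |V w| ≤ 1 := fun z w hw => hVb w hw.1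
  have hDbd : ∀ z : ℝ, 0 ≤ z → ∀ w ∈ Icc (0:ℝ) z, |D w| ≤ m z := fun z _ w hw => hle_m hw
  -- the mixture identity for inner integrals
  have hinnmix : ∀ z : ℝ, lhat * inn μH Vind z + ρ * inn ν₁₂ Vind z
      = ltil * inn μT Vind z + (ρ * inn ν₁ Vind z + ρ * inn ν₂ Vind z) := by
    intro z
    have hH : IntegrableOn (fun y => Vind (z - y)) (Icc 0 z) μH :=
      intOn_comp μH hVindmeas (hVindbd z)
    have hT : IntegrableOn (fun y => Vind (z - y)) (Icc 0 z) μT :=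
      intOn_comp μT hVindmeas (hVindbd z)
    have h1 : IntegrableOn (fun y => Vind (z - y)) (Icc 0 z) ν₁ :=
      intOn_comp ν₁ hVindmeas (hVindbd z)
    have h2 : IntegrableOn (fun y => Vind (z - y)) (Icc 0 z) ν₂ :=
      intOn_comp ν₂ hVindmeas (hVindbd z)
    have h12 : IntegrableOn (fun y => Vind (z - y)) (Icc 0 z) ν₁₂ :=
      intOn_comp ν₁₂ hVindmeas (hVindbd z)
    have eL : ∫ y in Icc (0:ℝ) z, Vind (z - y)
          ∂(ENNReal.ofReal lhat • μH + ENNReal.ofReal ρ • ν₁₂)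
        = lhat * inn μH Vind z + ρ * inn ν₁₂ Vind z := by
      rw [setIntegral_add_meas _ _ (integrableOn_smul_meas ENNReal.ofReal_ne_top hH)
        (integrableOn_smul_meas ENNReal.ofReal_ne_top h12),
        setIntegral_smul_meas μH hlhat0, setIntegral_smul_meas ν₁₂ hρ]
      rfl
    have eR : ∫ y in Icc (0:ℝ) z, Vind (z - y)
          ∂(ENNReal.ofReal ltil • μT + (ENNReal.ofReal ρ • ν₁ + ENNReal.ofReal ρ • ν₂))
        = ltil * inn μT Vind z + (ρ * inn ν₁ Vind z + ρ * inn ν₂ Vind z) := by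
      rw [setIntegral_add_meas _ _ (integrableOn_smul_meas ENNReal.ofReal_ne_top hT)
        ((integrableOn_smul_meas ENNReal.ofReal_ne_top h1).add_measure
          (integrableOn_smul_meas ENNReal.ofReal_ne_top h2)),
        setIntegral_add_meas _ _ (integrableOn_smul_meas ENNReal.ofReal_ne_top h1)
          (integrableOn_smul_meas ENNReal.ofReal_ne_top h2),
        setIntegral_smul_meas μT hltil.le, setIntegral_smul_meas ν₁ hρ,
        setIntegral_smul_meas ν₂ hρ]
      rfl
    rw [← eL, ← eR, hMeq]
  -- the pointwise identity between the two integrands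
  have eW : ∀ z ≥ (0:ℝ), lhat * G μH Vind z
      = ltil * G μT Vind z + ρ * (G ν₁ Vind z + G ν₂ Vind z - G ν₁₂ Vind z) := by
    intro z _
    have hinn := hinnmix z
    have hFz : lhat * FF μH z = ltil * FF μT z + ρ * (FF ν₁ z + FF ν₂ z - FF ν₁₂ z) := hmix z
    simp only [G]
    linear_combination (Vind z - 1) * hlhat + hFz - hinn
  -- bound |W z| ≤ 2 for z ≥ 0
  have hWb : ∀ z ≥ (0:ℝ), |G ν₁ Vind z + G ν₂ Vind z - G ν₁₂ Vind z| ≤ 2 := by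
    intro z hz
    have hVz := hVind01 z hz
    have hIcc : ∀ w ∈ Icc (0:ℝ) z, Vind w ∈ Icc (0:ℝ) 1 := fun w hw => hVind01 w hw.1
    have hpos : ∀ w ∈ Icc (0:ℝ) z, 0 ≤ Vind w := fun w hw => (hIcc w hw).1
    have b1l : 0 ≤ inn ν₁ Vind z := inn_nonneg ν₁ hpos
    have b2l : 0 ≤ inn ν₂ Vind z := inn_nonneg ν₂ hpos
    have b12l : 0 ≤ inn ν₁₂ Vind z := inn_nonneg ν₁₂ hpos
    have b1u : inn ν₁ Vind z ≤ FF ν₁ z := inn_le_FF ν₁ hν₁0 hVindmeas hz hIcc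
    have b2u : inn ν₂ Vind z ≤ FF ν₂ z := inn_le_FF ν₂ hν₂0 hVindmeas hz hIcc
    have b12u : inn ν₁₂ Vind z ≤ FF ν₁₂ z := inn_le_FF ν₁₂ hν₁₂0 hVindmeas hz hIcc
    have f1 : FF ν₁ z ≤ 1 := FF_le_one ν₁ z
    have f2 : FF ν₂ z ≤ 1 := FF_le_one ν₂ z
    have f12 : FF ν₁₂ z ≤ 1 := FF_le_one ν₁₂ z
    have f1l : 0 ≤ FF ν₁ z := FF_nonneg ν₁ z
    have f2l : 0 ≤ FF ν₂ z := FF_nonneg ν₂ z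
    have f12l : 0 ≤ FF ν₁₂ z := FF_nonneg ν₁₂ z
    simp only [G]
    rw [abs_le]
    constructor <;> [nlinarith [hVz.1, hVz.2]; nlinarith [hVz.1, hVz.2]]
  -- measurability and integrability of the G functions
  have hGmeas : ∀ (μ : Measure ℝ) [IsProbabilityMeasure μ] (h : ℝ → ℝ), Measurable h →
      Measurable (G μ h) := by
    intro μ _ h hh
    exact ((hh.sub (measurable_inn μ hh)).add (FF_mono μ).measurable).sub measurable_const
  have hGbd : ∀ (μ : Measure ℝ) [IsProbabilityMeasure μ] (h : ℝ → ℝ), Measurable h →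
      (∀ w ∈ Ici (0:ℝ), |h w| ≤ 1) → ∀ z ≥ (0:ℝ), |G μ h z| ≤ 3 := by
    intro μ _ h _ hhb z hz
    have h1 : |h z| ≤ 1 := hhb z hz
    have h2 : |inn μ h z| ≤ 1 := abs_inn_le μ zero_le_one fun w hw => hhb w hw.1
    have h3 : 0 ≤ FF μ z := FF_nonneg μ z
    have h4 : FF μ z ≤ 1 := FF_le_one μ z
    rw [abs_le] at h1 h2 ⊢
    constructor <;> [simp only [G]; simp only [G]] <;> [linarith [h1.1, h2.2]; linarith [h1.2, h2.1]]
  have hGint : ∀ (μ : Measure ℝ) [IsProbabilityMeasure μ] (h : ℝ → ℝ), Measurable h →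
      (∀ w ∈ Ici (0:ℝ), |h w| ≤ 1) → ∀ x ≥ (0:ℝ), IntervalIntegrable (G μ h) volume 0 x := by
    intro μ _ h hh hhb x hx
    rw [intervalIntegrable_iff_integrableOn_Ioc_of_le hx]
    exact intOn volume (hGmeas μ h hh) measurableSet_Ioc measure_Ioc_lt_top
      (fun z hz => hGbd μ h hh hhb z hz.1.le)
  -- interval-integrability of z ↦ D z - inn μT D z
  have hEmeas : Measurable fun z => D z - inn μT D z := hDmeas.sub (measurable_inn μT hDmeas)
  have hEb : ∀ z ≥ (0:ℝ), ∀ C, m z ≤ C → |D z - inn μT D z| ≤ 2 * C := by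
    intro z hz C hC
    have h1 : |D z| ≤ m z := hle_m ⟨hz, le_refl z⟩
    have h2 : |inn μT D z| ≤ m z := abs_inn_le μT (hm0 z hz) (hDbd z hz)
    calc |D z - inn μT D z| ≤ |D z| + |inn μT D z| := abs_sub _ _
      _ ≤ 2 * C := by linarith
  have hEint : ∀ x ≥ (0:ℝ), IntervalIntegrable (fun z => D z - inn μT D z) volume 0 x := by
    intro x hx
    rw [intervalIntegrable_iff_integrableOn_Ioc_of_le hx]
    exact intOn volume hEmeas measurableSet_Ioc measure_Ioc_lt_top
      (fun z hz => hEb z hz.1.le 1 (hm1 z hz.1.le))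
  -- the key bound
  have KB : ∀ x ≥ (0:ℝ), c * |D x| ≤ 2 * ltil * (∫ z in (0:ℝ)..x, m z) + 2 * ρ * x := by
    intro x hx
    have hVeq' : V x = v₀ + ltil / c * ∫ z in (0:ℝ)..x, G μT V z := hVeq x hx
    have hVindeq' : Vind x = v₀ + lhat / c * ∫ z in (0:ℝ)..x, G μH Vind z := hVindeq x hx
    have intGT : IntervalIntegrable (G μT V) volume 0 x := hGint μT V hVmeas hVb x hx
    have intGT' : IntervalIntegrable (G μT Vind) volume 0 x := hGint μT Vind hVindmeas hVindb x hx
    have intGH : IntervalIntegrable (G μH Vind) volume 0 x := hGint μH Vind hVindmeas hVindb x hx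
    have intG1 : IntervalIntegrable (G ν₁ Vind) volume 0 x := hGint ν₁ Vind hVindmeas hVindb x hx
    have intG2 : IntervalIntegrable (G ν₂ Vind) volume 0 x := hGint ν₂ Vind hVindmeas hVindb x hx
    have intG12 : IntervalIntegrable (G ν₁₂ Vind) volume 0 x := hGint ν₁₂ Vind hVindmeas hVindb x hx
    have intW : IntervalIntegrable (fun z => G ν₁ Vind z + G ν₂ Vind z - G ν₁₂ Vind z)
        volume 0 x := (intG1.add intG2).sub intG12
    -- step A
    have e2 : lhat * ∫ z in (0:ℝ)..x, G μH Vind z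
        = ltil * (∫ z in (0:ℝ)..x, G μT Vind z)
          + ρ * ∫ z in (0:ℝ)..x, (G ν₁ Vind z + G ν₂ Vind z - G ν₁₂ Vind z) := by
      rw [← intervalIntegral.integral_const_mul, ← intervalIntegral.integral_const_mul, ← intervalIntegral.integral_const_mul,
        ← integral_add (intGT'.const_mul ltil) (intW.const_mul ρ)]
      apply integral_congr
      intro z hz
      rw [uIcc_of_le hx] at hz
      exact eW z hz.1
    -- step B
    have e3 : (∫ z in (0:ℝ)..x, G μT V z) - (∫ z in (0:ℝ)..x, G μT Vind z)
        = ∫ z in (0:ℝ)..x, (D z - inn μT D z) := by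
      rw [← integral_sub intGT intGT']
      apply integral_congr
      intro z hz
      rw [uIcc_of_le hx] at hz
      have hsub : inn μT D z = inn μT V z - inn μT Vind z := by
        have hv : IntegrableOn (fun y => V (z - y)) (Icc 0 z) μT :=
          intOn_comp μT hVmeas (hVbd z)
        have hvi : IntegrableOn (fun y => Vind (z - y)) (Icc 0 z) μT :=
          intOn_comp μT hVindmeas (hVindbd z)
        simp only [inn, hD]
        rw [← integral_sub hv hvi]
      simp only [G]
      rw [hsub]
      simp only [hD]
      ring
    have e4 : c * D x = ltil * (∫ z in (0:ℝ)..x, G μT V z)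
        - lhat * ∫ z in (0:ℝ)..x, G μH Vind z := by
      have : D x = ltil / c * (∫ z in (0:ℝ)..x, G μT V z)
          - lhat / c * ∫ z in (0:ℝ)..x, G μH Vind z := by
        simp only [hD]
        rw [hVeq', hVindeq']
        ring
      rw [this]
      field_simp
    have e5 : c * D x = ltil * (∫ z in (0:ℝ)..x, (D z - inn μT D z))
        - ρ * ∫ z in (0:ℝ)..x, (G ν₁ Vind z + G ν₂ Vind z - G ν₁₂ Vind z) := by
      rw [e4, e2, ← e3]
      ring
    -- estimates
    have hIDb : |∫ z in (0:ℝ)..x, (D z - inn μT D z)| ≤ 2 * ∫ z in (0:ℝ)..x, m z := by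
      calc |∫ z in (0:ℝ)..x, (D z - inn μT D z)|
          ≤ ∫ z in (0:ℝ)..x, |D z - inn μT D z| := abs_integral_le_integral_abs hx
        _ ≤ ∫ z in (0:ℝ)..x, 2 * m z := by
            refine integral_mono_on hx (hEint x hx).abs ((hmint x hx).const_mul 2) ?_
            exact fun z hz => hEb z hz.1 (m z) (le_refl _)
        _ = 2 * ∫ z in (0:ℝ)..x, m z := intervalIntegral.integral_const_mul 2 m
    have hIWb : |∫ z in (0:ℝ)..x, (G ν₁ Vind z + G ν₂ Vind z - G ν₁₂ Vind z)| ≤ 2 * x := by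
      calc |∫ z in (0:ℝ)..x, (G ν₁ Vind z + G ν₂ Vind z - G ν₁₂ Vind z)|
          ≤ ∫ z in (0:ℝ)..x, |G ν₁ Vind z + G ν₂ Vind z - G ν₁₂ Vind z| :=
            abs_integral_le_integral_abs hx
        _ ≤ ∫ _ in (0:ℝ)..x, (2:ℝ) := by
            refine integral_mono_on hx intW.abs intervalIntegrable_const ?_
            exact fun z hz => hWb z hz.1
        _ = 2 * x := by rw [intervalIntegral.integral_const]; simp [smul_eq_mul]; ring
    calc c * |D x| = |c * D x| := by rw [abs_mul, abs_of_pos hc]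
      _ ≤ ltil * |∫ z in (0:ℝ)..x, (D z - inn μT D z)|
          + ρ * |∫ z in (0:ℝ)..x, (G ν₁ Vind z + G ν₂ Vind z - G ν₁₂ Vind z)| := by
          rw [e5]
          calc |ltil * (∫ z in (0:ℝ)..x, (D z - inn μT D z))
              - ρ * ∫ z in (0:ℝ)..x, (G ν₁ Vind z + G ν₂ Vind z - G ν₁₂ Vind z)|
              ≤ |ltil * (∫ z in (0:ℝ)..x, (D z - inn μT D z))|
                + |ρ * ∫ z in (0:ℝ)..x, (G ν₁ Vind z + G ν₂ Vind z - G ν₁₂ Vind z)| :=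
                abs_sub _ _
            _ = ltil * |∫ z in (0:ℝ)..x, (D z - inn μT D z)|
                + ρ * |∫ z in (0:ℝ)..x, (G ν₁ Vind z + G ν₂ Vind z - G ν₁₂ Vind z)| := by
                rw [abs_mul, abs_mul, abs_of_pos hltil, abs_of_nonneg hρ]
      _ ≤ 2 * ltil * (∫ z in (0:ℝ)..x, m z) + 2 * ρ * x := by
          have := mul_le_mul_of_nonneg_left hIDb hltil.le
          have := mul_le_mul_of_nonneg_left hIWb hρ
          linarith
  -- the recursive inequality for m
  have hrec : ∀ x ≥ (0:ℝ), m x ≤ (2 * ltil / c) * (∫ z in (0:ℝ)..x, m z) + (2 * ρ / c) * x := by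
    intro x hx
    refine hm_le hx fun z hz => ?_
    have h1 := KB z hz.1
    have h2 : (∫ u in (0:ℝ)..z, m u) ≤ ∫ u in (0:ℝ)..x, m u := by
      have i1 : IntervalIntegrable m volume 0 z := hmint z hz.1
      have i2 : IntervalIntegrable m volume z x :=
        (hmint x hx).mono_set (by rw [uIcc_of_le hx, uIcc_of_le hz.2]; exact Icc_subset_Icc hz.1 le_rfl)
      have hadd : (∫ u in (0:ℝ)..z, m u) + ∫ u in z..x, m u = ∫ u in (0:ℝ)..x, m u :=
        integral_add_adjacent_intervals i1 i2
      have hpos : 0 ≤ ∫ u in z..x, m u :=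
        integral_nonneg hz.2 fun u hu => hm0 u (hz.1.trans hu.1)
      linarith
    have h3 : 2 * ltil * (∫ u in (0:ℝ)..z, m u) + 2 * ρ * z
        ≤ 2 * ltil * (∫ u in (0:ℝ)..x, m u) + 2 * ρ * x := by
      have := mul_le_mul_of_nonneg_left h2 (by linarith : (0:ℝ) ≤ 2 * ltil)
      have := mul_le_mul_of_nonneg_left hz.2 (by linarith : (0:ℝ) ≤ 2 * ρ)
      linarith
    have hcT : c * ((2 * ltil / c) * (∫ u in (0:ℝ)..x, m u) + (2 * ρ / c) * x)
        = 2 * ltil * (∫ u in (0:ℝ)..x, m u) + 2 * ρ * x := by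
      field_simp
    have h4 : c * |D z| ≤ c * ((2 * ltil / c) * (∫ u in (0:ℝ)..x, m u) + (2 * ρ / c) * x) := by
      rw [hcT]; linarith
    exact le_of_mul_le_mul_left h4 hc
  -- Grönwall
  have hK : 0 < 2 * ltil / c := by positivity
  have hbnn : 0 ≤ 2 * ρ / c := by positivity
  have hfin := gronwall_aux hK hbnn m hm1 hmint hrec
  intro x hx
  have h1 : |V x - Vind x| ≤ m x := hle_m ⟨hx, le_refl x⟩
  have h2 := hfin x hx
  have harg : 2 * ltil / c * x = 2 * ltil * x / c := by ring
  have hcoef : (2 * ρ / c) / (2 * ltil / c) = ρ / ltil := by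
    field_simp
  calc |V x - Vind x| ≤ m x := h1
    _ ≤ (2 * ρ / c) / (2 * ltil / c) * (Real.exp (2 * ltil / c * x) - 1) := h2
    _ = ρ * (Real.exp (2 * ltil * x / c) - 1) / ltil := by
        rw [hcoef, harg]; ring
end
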